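/- arXiv:1409.8123 — 6 statements merged into one kernel-verified Lean document; each statement's English description precedes it below -/
import Mathlib

section
/- The number of maximal triangle-free graphs on the vertex set {1,...,n} is at least 2^{n^2/8 + o(n^2)}. Precisely: for every ε > 0 there exists N such that for all n ≥ N, the number of simple graphs H on vertex set Fin n that are maximal triangle-free is at least 2^{(1/8 - ε) n^2}. -/
/-!
Join each vertex `y` of an independent set `Y` to exactly one end of each of `m` disjoint
edges: the `2 ^ (m * |Y|)` choices give distinct triangle-free graphs. To make all of them
maximal, add an apex adjacent to all of `Y`, and reserve `2 (p + 1)` vertices of `Y`, with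
`m ≤ 2 ^ p`, as a gadget whose adjacencies are fixed by the binary digits of the index of each
matching edge; this gives any two non-adjacent vertices a common neighbour. Taking
`m = n / 4` and `p = 2 √n` leaves `|Y| = n / 2 - O(√n)`, whence `2 ^ (n ^ 2 / 8 - O(n ^ (3/2)))`
maximal triangle-free graphs.
-/

/-- `H` is maximal triangle-free: `H` contains no triangle, and adding any non-edge of `H`
creates a triangle. -/
def MaximalTriangleFree {n : ℕ} (H : SimpleGraph (Fin n)) : Prop :=
  H.CliqueFree 3 ∧ ∀ u v : Fin n, u ≠ v → ¬ H.Adj u v →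
    ¬ (H ⊔ SimpleGraph.fromEdgeSet {s(u, v)}).CliqueFree 3

open SimpleGraph

theorem MaximalTriangleFree.of_exists_common_adj {n : ℕ} {H : SimpleGraph (Fin n)}
    (hH : H.CliqueFree 3)
    (h : ∀ u v, u ≠ v → ¬ H.Adj u v → ∃ w, H.Adj u w ∧ H.Adj v w) :
    MaximalTriangleFree H := by
  refine ⟨hH, fun u v huv hnadj hfree => ?_⟩
  obtain ⟨w, huw, hvw⟩ := h u v huv hnadj
  refine hfree {u, v, w} (is3Clique_triple_iff.2 ⟨?_, .inl huw, .inl hvw⟩)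
  exact .inr ((fromEdgeSet_adj _).2 ⟨rfl, huv⟩)

theorem MaximalTriangleFree.map_of_exists_common_adj {V : Type*} {n : ℕ} (e : V ≃ Fin n)
    {G : SimpleGraph V} (hG : G.CliqueFree 3)
    (h : ∀ u v, u ≠ v → ¬ G.Adj u v → ∃ w, G.Adj u w ∧ G.Adj v w) :
    MaximalTriangleFree (G.map e) := by
  let φ := Iso.map e G
  refine .of_exists_common_adj (hG.comap φ.symm.isContained) fun u v huv hnadj => ?_
  obtain ⟨a, rfl⟩ := e.surjective u
  obtain ⟨b, rfl⟩ := e.surjective v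
  obtain ⟨w, haw, hbw⟩ := h a b (ne_of_apply_ne e huv) (mt φ.map_adj_iff.2 hnadj)
  exact ⟨e w, φ.map_adj_iff.2 haw, φ.map_adj_iff.2 hbw⟩

/-- `none` is the apex, `some (inl (i, b))` is the end `b` of the `i`-th matching edge and
`some (inr y)` is a vertex of the independent side `Y`; in `folkloreGraph f`, the vertex `y` is
joined to the end `f i y` of the `i`-th matching edge, and the apex to all of `Y`. -/
abbrev FolkloreVertex (ι Y : Type*) := Option ((ι × Bool) ⊕ Y)

variable {ι Y : Type*}

def folkloreRel (f : ι → Y → Bool) : FolkloreVertex ι Y → FolkloreVertex ι Y → Prop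
  | none, some (.inr _) => True
  | some (.inl (i, b)), some (.inl (i', b')) => i = i' ∧ b ≠ b'
  | some (.inl (i, b)), some (.inr y) => f i y = b
  | _, _ => False

def folkloreGraph (f : ι → Y → Bool) : SimpleGraph (FolkloreVertex ι Y) :=
  SimpleGraph.fromRel (folkloreRel f)

namespace folkloreGraph
variable (f : ι → Y → Bool)

@[simp] lemma adj_none_pair (i b) : ¬ (folkloreGraph f).Adj none (some (.inl (i, b))) := by
  simp [folkloreGraph, folkloreRel]
@[simp] lemma adj_pair_none (i b) : ¬ (folkloreGraph f).Adj (some (.inl (i, b))) none := by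
  simp [folkloreGraph, folkloreRel]
@[simp] lemma adj_none_leaf (y) : (folkloreGraph f).Adj none (some (.inr y)) := by
  simp [folkloreGraph, folkloreRel]
@[simp] lemma adj_leaf_none (y) : (folkloreGraph f).Adj (some (.inr y)) none := by
  simp [folkloreGraph, folkloreRel]
@[simp] lemma adj_pair_pair (i b i' b') :
    (folkloreGraph f).Adj (some (.inl (i, b))) (some (.inl (i', b'))) ↔ i = i' ∧ b ≠ b' := by
  simp [folkloreGraph, folkloreRel]; grind
@[simp] lemma adj_pair_leaf (i b y) :
    (folkloreGraph f).Adj (some (.inl (i, b))) (some (.inr y)) ↔ f i y = b := by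
  simp [folkloreGraph, folkloreRel]
@[simp] lemma adj_leaf_pair (i b y) :
    (folkloreGraph f).Adj (some (.inr y)) (some (.inl (i, b))) ↔ f i y = b := by
  simp [folkloreGraph, folkloreRel]
@[simp] lemma adj_leaf_leaf (y y') : ¬ (folkloreGraph f).Adj (some (.inr y)) (some (.inr y')) := by
  simp [folkloreGraph, folkloreRel]

/-- `Y` is independent and the apex sees only `Y`, so a triangle would need a vertex of `Y`
joined to both ends of a matching edge. -/
theorem cliqueFree_three : (folkloreGraph f).CliqueFree 3 := by
  classical
  intro s hs
  obtain ⟨a, b, c, hab, hac, hbc, -⟩ := is3Clique_iff.1 hs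
  rcases a with _ | ⟨_, _ | _⟩ | _ <;> rcases b with _ | ⟨_, _ | _⟩ | _ <;>
    rcases c with _ | ⟨_, _ | _⟩ | _ <;> simp_all

theorem exists_common_adj
    (hf : ∀ i i' b b', (i = i' → b = b') → ∃ y, f i y = b ∧ f i' y = b')
    (u v : FolkloreVertex ι Y) (huv : u ≠ v) (hnadj : ¬ (folkloreGraph f).Adj u v) :
    ∃ w, (folkloreGraph f).Adj u w ∧ (folkloreGraph f).Adj v w := by
  rcases u with _ | ⟨i, b⟩ | y <;> rcases v with _ | ⟨i', b'⟩ | y'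
  · exact (huv rfl).elim
  · obtain ⟨y, -, hy⟩ := hf i' i' b' b' fun _ => rfl
    exact ⟨some (.inr y), by simp [hy]⟩
  · simp at hnadj
  · obtain ⟨y, hy, -⟩ := hf i i b b fun _ => rfl
    exact ⟨some (.inr y), by simp [hy]⟩
  · obtain ⟨y, hy, hy'⟩ := hf i i' b b' fun h => by simp_all
    exact ⟨some (.inr y), by simp [hy, hy']⟩
  · exact ⟨some (.inl (i, !b)), by simpa [Bool.eq_not_iff] using hnadj⟩
  · simp at hnadj
  · exact ⟨some (.inl (i', !b')), by simpa [Bool.eq_not_iff] using hnadj⟩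
  · exact ⟨none, by simp⟩

theorem injective : Function.Injective (folkloreGraph : (ι → Y → Bool) → _) := by
  intro f f' h
  funext i y
  simpa [eq_comm] using congrArg (fun G => G.Adj (some (.inl (i, f i y))) (some (.inr y))) h

end folkloreGraph

theorem Nat.exists_xor_testBit_eq {a a' p : ℕ} (ha : a < 2 ^ p) (ha' : a' < 2 ^ p) {b b' : Bool}
    (h : a = a' → b = b') :
    ∃ j < p + 1, ∃ c : Bool, (c ^^ a.testBit j) = b ∧ (c ^^ a'.testBit j) = b' := by
  suffices ∃ j < p + 1, (a.testBit j ^^ a'.testBit j) = (b ^^ b') by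
    obtain ⟨j, hj, hbit⟩ := this
    refine ⟨j, hj, b ^^ a.testBit j, by simp, ?_⟩
    rw [Bool.xor_assoc, hbit]; simp
  have high_bit {j} (hj : p ≤ j) : a.testBit j = false ∧ a'.testBit j = false :=
    ⟨Nat.testBit_lt_two_pow (ha.trans_le (Nat.pow_le_pow_right two_pos hj)),
      Nat.testBit_lt_two_pow (ha'.trans_le (Nat.pow_le_pow_right two_pos hj))⟩
  by_cases hbb : b = b'
  · exact ⟨p, p.lt_succ_self, by simp [high_bit le_rfl, hbb]⟩
  · obtain ⟨j, hj⟩ := Nat.exists_testBit_ne_of_ne (mt h hbb)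
    have hjp : j < p := by
      by_contra! hpj
      exact hj ((high_bit hpj).1.trans (high_bit hpj).2.symm)
    refine ⟨j, hjp.trans p.lt_succ_self, ?_⟩
    revert hj hbb; cases a.testBit j <;> cases a'.testBit j <;> cases b <;> cases b' <;> simp

def bitGadget {m : ℕ} {K : Type*} (p : ℕ) (g : Fin m → K → Bool) :
    Fin m → (Fin (p + 1) × Bool) ⊕ K → Bool
  | i, .inl (j, c) => c ^^ i.val.testBit j
  | i, .inr y => g i y

theorem exists_bitGadget_eq {m p : ℕ} {K : Type*} (hm : m ≤ 2 ^ p) (g : Fin m → K → Bool)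
    (i i' : Fin m) (b b' : Bool) (h : i = i' → b = b') :
    ∃ y, bitGadget p g i y = b ∧ bitGadget p g i' y = b' := by
  obtain ⟨j, hj, c, hc, hc'⟩ := Nat.exists_xor_testBit_eq (i.2.trans_le hm) (i'.2.trans_le hm)
    (b := b) (b' := b') (fun hii' => h (Fin.ext hii'))
  exact ⟨.inl (⟨j, hj⟩, c), hc, hc'⟩

theorem bitGadget_injective {m : ℕ} {K : Type*} (p : ℕ) :
    Function.Injective (bitGadget (m := m) (K := K) p) := fun _ _ h =>
  funext fun i => funext fun y => congrFun (congrFun h i) (.inr y)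

theorem two_pow_le_card_maximalTriangleFree {m p k n : ℕ} (hm : m ≤ 2 ^ p)
    (hn : 2 * m + 2 * (p + 1) + k + 1 = n) :
    2 ^ (m * k) ≤ Nat.card {H : SimpleGraph (Fin n) // MaximalTriangleFree H} := by
  have hcard : Fintype.card (FolkloreVertex (Fin m) ((Fin (p + 1) × Bool) ⊕ Fin k)) = n := by
    simp; omega
  let e := Fintype.equivFinOfCardEq hcard
  let F (g : Fin m → Fin k → Bool) : {H : SimpleGraph (Fin n) // MaximalTriangleFree H} :=
    ⟨(folkloreGraph (bitGadget p g)).map e,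
      .map_of_exists_common_adj e (folkloreGraph.cliqueFree_three _)
        (folkloreGraph.exists_common_adj _ (exists_bitGadget_eq hm g))⟩
  have hF : Function.Injective F := fun g g' h =>
    bitGadget_injective p <| folkloreGraph.injective <|
      map_injective e.toEmbedding (congrArg Subtype.val h)
  calc 2 ^ (m * k) = Nat.card (Fin m → Fin k → Bool) := by simp [pow_mul']
    _ ≤ _ := Nat.card_le_card_of_injective F hF

theorem Nat.le_two_pow_two_mul_sqrt (n : ℕ) : n ≤ 2 ^ (2 * n.sqrt) := by
  have := n.lt_succ_sqrt
  have := Nat.two_mul_sq_add_one_le_two_pow_two_mul n.sqrt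
  nlinarith

theorem exists_folklore_parameters {ε : ℝ} (hε : 0 < ε) :
    ∃ N : ℕ, ∀ n ≥ N, ∃ m p k : ℕ, m ≤ 2 ^ p ∧ 2 * m + 2 * (p + 1) + k + 1 = n ∧
      (1 / 8 - ε) * (n : ℝ) ^ 2 ≤ m * k := by
  obtain ⟨A, hA⟩ := exists_nat_ge (2 / ε)
  refine ⟨(A + 10) ^ 2, fun n hn => ?_⟩
  set q := n.sqrt
  have hAq : A + 10 ≤ q := Nat.le_sqrt'.2 hn
  have hqn : q * q ≤ n := n.sqrt_le
  have h10q : 10 * q ≤ n := (Nat.mul_le_mul_right q (by omega)).trans hqn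
  have hk : 2 * (n / 4) + 4 * q + 3 ≤ n := by omega
  refine ⟨n / 4, 2 * q, n - (2 * (n / 4) + 4 * q + 3),
    (n.div_le_self 4).trans n.le_two_pow_two_mul_sqrt, by omega, ?_⟩
  have hεq : 2 ≤ ε * q := by
    rw [div_le_iff₀ hε] at hA
    nlinarith [(Nat.cast_le (α := ℝ)).2 (hAq.trans' (Nat.le_add_right A 10))]
  have hqR : (10 : ℝ) ≤ q := by exact_mod_cast hAq.trans' (Nat.le_add_left 10 A)
  have hqnR : (q : ℝ) * q ≤ n := by exact_mod_cast hqn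
  have hεn : 8 * q + 9 ≤ 8 * ε * n := by nlinarith
  have hM : (n : ℝ) ≤ 4 * (n / 4 : ℕ) + 3 := by
    exact_mod_cast (by omega : n ≤ 4 * (n / 4) + 3)
  have hM' : 4 * ((n / 4 : ℕ) : ℝ) ≤ n := by exact_mod_cast (by omega : 4 * (n / 4) ≤ n)
  have hkR : 2 * ((n / 4 : ℕ) : ℝ) + 4 * q + 3 ≤ n := by exact_mod_cast hk
  rw [Nat.cast_sub hk]
  push_cast
  -- `8 m k ≥ (n - 3) (n - 8 q - 6) ≥ n ^ 2 - (8 q + 9) n ≥ (1 - 8 ε) n ^ 2`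
  generalize ((n / 4 : ℕ) : ℝ) = M at *
  nlinarith [mul_le_mul_of_nonneg_right hεn (Nat.cast_nonneg n),
    mul_le_mul_of_nonneg_right hM (by linarith : (0 : ℝ) ≤ 2 * (n - 2 * M - 4 * q - 3)),
    mul_le_mul_of_nonneg_left (by linarith : (n : ℝ) - 8 * q - 6 ≤ 2 * (n - 2 * M - 4 * q - 3))
      (by linarith : (0 : ℝ) ≤ n - 3)]

/-- The number of maximal triangle-free graphs on vertex set `Fin n` is at least
`2 ^ (n^2/8 - o(n^2))`. -/
theorem maximal_triangle_free_lower_bound :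
    ∀ ε : ℝ, 0 < ε → ∃ N : ℕ, ∀ n : ℕ, N ≤ n →
      2 ^ ((1 / 8 - ε) * (n : ℝ) ^ 2)
        ≤ (Nat.card {H : SimpleGraph (Fin n) // MaximalTriangleFree H} : ℝ) := by
  intro ε hε
  obtain ⟨N, hN⟩ := exists_folklore_parameters hε
  refine ⟨N, fun n hn => ?_⟩
  obtain ⟨m, p, k, hm, hsize, hmk⟩ := hN n hn
  calc (2 : ℝ) ^ ((1 / 8 - ε) * (n : ℝ) ^ 2)
      ≤ 2 ^ ((m * k : ℕ) : ℝ) :=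
        Real.rpow_le_rpow_of_exponent_le one_le_two (by exact_mod_cast hmk)
    _ = (2 ^ (m * k) : ℕ) := by norm_cast
    _ ≤ _ := by exact_mod_cast two_pow_le_card_maximalTriangleFree hm hsize
end

section
/- (Erdős–Simonovits supersaturation for triangles.) For every γ > 0 there exists δ > 0 such that every graph on n vertices with at least (1/4 + γ) n^2 edges contains at least δ n^3 triangles, i.e., at least δ n^3 three-element vertex subsets that are pairwise adjacent. -/
/- Mantel's theorem (Turán for `K₃`) bounds the edges of a triangle-free graph by `n²/4`, so
deleting fewer than `γ n²` edges from a graph with `(1/4 + γ) n²` edges cannot destroy all its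
triangles: the graph is `γ`-far from triangle-free. The triangle removal lemma then yields
`δ n³` triangles, with `δ = triangleRemovalBound γ`. -/

open Finset

/-- The number of triangles of `G`: the number of 3-element vertex subsets that are
pairwise adjacent in `G`. -/
noncomputable def triangleCount {V : Type*} (G : SimpleGraph V) : ℕ :=
  Nat.card {s : Finset V // G.IsNClique 3 s}

namespace SimpleGraph

variable {V : Type*} [Fintype V] {G : SimpleGraph V} [DecidableRel G.Adj]

theorem CliqueFree.four_mul_card_edgeFinset_le (h : G.CliqueFree 3) :
    4 * #G.edgeFinset ≤ Fintype.card V ^ 2 := by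
  set n := Fintype.card V
  have hturan : #G.edgeFinset ≤ (n ^ 2 - (n % 2) ^ 2) * (2 - 1) / (2 * 2) + (n % 2).choose 2 :=
    h.card_edgeFinset_le
  rw [Nat.choose_eq_zero_of_lt (Nat.mod_lt _ two_pos), add_zero, Nat.add_one_sub_one, mul_one]
    at hturan
  calc 4 * #G.edgeFinset ≤ 4 * ((n ^ 2 - (n % 2) ^ 2) / (2 * 2)) := by gcongr
    _ ≤ n ^ 2 - (n % 2) ^ 2 := Nat.mul_div_le _ _
    _ ≤ n ^ 2 := Nat.sub_le _ _

theorem farFromTriangleFree_of_le_card_edgeFinset {ε : ℝ}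
    (h : (1 / 4 + ε) * Fintype.card V ^ 2 ≤ #G.edgeFinset) : G.FarFromTriangleFree ε := by
  rw [farFromTriangleFree_iff]
  intro H _ _ hH
  have hmantel : (4 * #H.edgeFinset : ℝ) ≤ Fintype.card V ^ 2 := by
    exact_mod_cast hH.four_mul_card_edgeFinset_le
  push_cast
  linarith

end SimpleGraph

theorem triangleCount_eq_card_cliqueFinset {V : Type*} [Fintype V] [DecidableEq V]
    (G : SimpleGraph V) [DecidableRel G.Adj] : triangleCount G = #(G.cliqueFinset 3) := by
  simp only [triangleCount, Nat.card_eq_fintype_card, Fintype.card_subtype]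
  rfl

/-- Erdős–Simonovits supersaturation for triangles: for every `γ > 0` there is `δ > 0`
such that every graph on `n` vertices with at least `(1/4 + γ) n^2` edges contains at
least `δ n^3` triangles. -/
theorem supersaturation :
    ∀ γ : ℝ, 0 < γ → ∃ δ : ℝ, 0 < δ ∧
      ∀ (n : ℕ) (G : SimpleGraph (Fin n)),
        (1 / 4 + γ) * (n : ℝ) ^ 2 ≤ (Nat.card G.edgeSet : ℝ) →
        δ * (n : ℝ) ^ 3 ≤ (triangleCount G : ℝ) := by
  intro γ hγ
  refine ⟨SimpleGraph.triangleRemovalBound γ, SimpleGraph.triangleRemovalBound_pos hγ, ?_⟩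
  intro n G hG
  classical
  rw [Nat.card_eq_fintype_card, ← SimpleGraph.edgeFinset_card] at hG
  have hfar := SimpleGraph.farFromTriangleFree_of_le_card_edgeFinset (G := G) (ε := γ)
    (by simpa using hG)
  simpa [triangleCount_eq_card_cliqueFinset] using hfar.le_card_cliqueFinset
end

section
/- (Ruzsa–Szemerédi triangle removal lemma.) For every ε > 0 there exists δ > 0 such that for every graph G on n vertices containing at most δ n^3 triangles, there exists a set F of at most ε n^2 edges of G such that the graph G − F obtained by deleting the edges in F is triangle-free. -/
open Finset Fintype

namespace SimpleGraph

variable {α : Type*} [Fintype α] [DecidableEq α]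

lemma triangleCount_eq_card_cliqueFinset (G : SimpleGraph α) [DecidableRel G.Adj] :
    triangleCount G = #(G.cliqueFinset 3) := by
  rw [triangleCount, Nat.card_eq_fintype_card, Fintype.card_subtype]
  rfl

lemma natCard_edgeSet_sdiff_of_le {G H : SimpleGraph α} [DecidableRel G.Adj]
    [DecidableRel H.Adj] (h : H ≤ G) :
    (Nat.card ↥(G.edgeSet \ H.edgeSet) : ℝ) = #G.edgeFinset - #H.edgeFinset := by
  rw [← coe_edgeFinset, ← coe_edgeFinset, ← coe_sdiff, Nat.card_coe_set_eq, Set.ncard_coe_finset,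
    card_sdiff_of_subset (edgeFinset_mono h), Nat.cast_sub (card_le_card (edgeFinset_mono h))]

/-- Halving the bound of `triangle_removal` turns its strict hypothesis into a non-strict one:
a positive triangle count that is at most half the bound is below it, and a graph without
triangles needs no edge removed. -/
lemma exists_deleteEdges_cliqueFree_three_of_card_cliqueFinset_le (G : SimpleGraph α)
    [DecidableRel G.Adj] {ε : ℝ} (hε : 0 < ε)
    (hG : #(G.cliqueFinset 3) ≤ triangleRemovalBound ε / 2 * card α ^ 3) :
    ∃ F ⊆ G.edgeSet, (Nat.card F : ℝ) ≤ ε * card α ^ 2 ∧ (G.deleteEdges F).CliqueFree 3 := by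
  obtain hfree | hpos := (G.cliqueFinset 3).eq_empty_or_nonempty
  · exact ⟨∅, Set.empty_subset _, by simpa using by positivity,
      by rwa [deleteEdges_empty, ← cliqueFinset_eq_empty_iff]⟩
  have hlt : #(G.cliqueFinset 3) < triangleRemovalBound ε * card α ^ 3 := by
    have : (0 : ℝ) < #(G.cliqueFinset 3) := by exact_mod_cast hpos.card_pos
    linarith
  obtain ⟨H, hle, _, hcard, hH⟩ := triangle_removal hlt
  refine ⟨G.edgeSet \ H.edgeSet, Set.sdiff_subset, ?_, by rwa [deleteEdges_sdiff_eq_of_le hle]⟩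
  rw [natCard_edgeSet_sdiff_of_le hle]
  exact_mod_cast hcard.le

end SimpleGraph

/-- Ruzsa–Szemerédi triangle removal lemma: for every `ε > 0` there is `δ > 0` such that
every graph `G` on `n` vertices with at most `δ n^3` triangles can be made triangle-free
by removing a set `F` of at most `ε n^2` edges. -/
theorem triangle_removal_lemma :
    ∀ ε : ℝ, 0 < ε → ∃ δ : ℝ, 0 < δ ∧
      ∀ (n : ℕ) (G : SimpleGraph (Fin n)),
        (triangleCount G : ℝ) ≤ δ * (n : ℝ) ^ 3 →
        ∃ F : Set (Sym2 (Fin n)), F ⊆ G.edgeSet ∧ (Nat.card F : ℝ) ≤ ε * (n : ℝ) ^ 2 ∧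
          (G.deleteEdges F).CliqueFree 3 := by
  intro ε hε
  refine ⟨SimpleGraph.triangleRemovalBound ε / 2,
    half_pos (SimpleGraph.triangleRemovalBound_pos hε), fun n G hG ↦ ?_⟩
  classical
  rw [SimpleGraph.triangleCount_eq_card_cliqueFinset] at hG
  simpa using G.exists_deleteEdges_cliqueFree_three_of_card_cliqueFinset_le hε (by simpa using hG)
end

section
/- (Hujter–Tuza.) Every triangle-free graph G on m vertices has at most 2^{m/2} maximal independent sets; that is, the number of vertex subsets I of G that are independent sets and maximal with respect to inclusion among independent sets is at most 2^{m/2}. -/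
/-- `I` is an independent set of the graph `G`: no two vertices of `I` are adjacent. -/
def IsIndepSet {V : Type*} (G : SimpleGraph V) (I : Set V) : Prop :=
  ∀ ⦃u⦄, u ∈ I → ∀ ⦃v⦄, v ∈ I → ¬ G.Adj u v

/-- `I` is a maximal independent set of `G`: it is independent, and adding any vertex
outside `I` destroys independence. -/
def IsMaximalIndepSet {V : Type*} (G : SimpleGraph V) (I : Set V) : Prop :=
  IsIndepSet G I ∧ ∀ v ∉ I, ¬ IsIndepSet G (insert v I)

section Counting

lemma card_imp {α : Type*} [Finite α] {p q : α → Prop} (h : ∀ x, p x → q x) :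
    Nat.card {x // p x} ≤ Nat.card {x // q x} :=
  Nat.card_le_card_of_injective (fun x => ⟨x.1, h x.1 x.2⟩)
    (by intro a b hab
        simp only [Subtype.mk.injEq] at hab
        exact Subtype.ext hab)

lemma card_split {α : Type*} [Finite α] (p q : α → Prop) :
    Nat.card {x // p x} ≤ Nat.card {x // p x ∧ q x} + Nat.card {x // p x ∧ ¬ q x} := by
  classical
  rw [← Nat.card_sum]
  apply Nat.card_le_card_of_injective
    (fun x => if h : q x.1 then Sum.inl ⟨x.1, x.2, h⟩ else Sum.inr ⟨x.1, x.2, h⟩)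
  intro a b hab
  by_cases ha : q a.1 <;> by_cases hb : q b.1 <;>
    simp only [ha, hb, dif_pos, dif_neg, not_false_iff, Sum.inl.injEq, Sum.inr.injEq,
      Subtype.mk.injEq, reduceCtorEq] at hab <;>
    first
      | exact Subtype.ext hab
      | exact absurd hab (by simp)

lemma card_zero {α : Type*} (p : α → Prop) (h : ∀ x, ¬ p x) :
    Nat.card {x // p x} = 0 := by
  have : IsEmpty {x // p x} := ⟨fun x => h x.1 x.2⟩
  exact Nat.card_eq_zero.mpr (Or.inl this)

lemma card_fiber {α β : Type*} [Finite α] [Fintype β] (f : α → β) :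
    Nat.card α = ∑ b : β, Nat.card {a // f a = b} := by
  classical
  cases nonempty_fintype α
  rw [← Nat.card_congr (Equiv.sigmaFiberEquiv f), Nat.card_eq_fintype_card,
    Fintype.card_sigma]
  simp [Nat.card_eq_fintype_card]

lemma card_subfiber {α : Type*} [Finite α] (q : α → Prop) {β : Type*} (c : α → β) (B : β) :
    Nat.card {x : {a // q a} // c x.1 = B} ≤ Nat.card {a // q a ∧ c a = B} :=
  Nat.card_le_card_of_injective (fun x => ⟨x.1.1, x.1.2, x.2⟩)
    (by intro a b hab
        simp only [Subtype.mk.injEq] at hab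
        exact Subtype.ext (Subtype.ext hab))

end Counting

section Dominate

variable {V : Type*} {G : SimpleGraph V} {I : Set V}

lemma exists_dominator (hI : IsMaximalIndepSet G I) {v : V} (hv : v ∉ I) :
    ∃ y ∈ I, G.Adj v y := by
  by_contra h
  push_neg at h
  refine hI.2 v hv ?_
  intro a ha b hb hab
  rcases Set.mem_insert_iff.mp ha with rfl | ha'
  · rcases Set.mem_insert_iff.mp hb with rfl | hb'
    · exact G.irrefl hab
    · exact h b hb' hab
  · rcases Set.mem_insert_iff.mp hb with rfl | hb'
    · exact h a ha' hab.symm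
    · exact hI.1 ha' hb' hab

end Dominate

section Key

variable {V : Type*} [Fintype V]

lemma keyA (G : SimpleGraph V) (W T : Set V) :
    Nat.card {I : Set V // IsMaximalIndepSet G I ∧ I ∩ W = T}
      ≤ Nat.card {J : Set ((W ∪ ⋃ t ∈ T, G.neighborSet t)ᶜ : Set V) //
          IsMaximalIndepSet (SimpleGraph.comap (Subtype.val) G) J} := by
  classical
  set R : Set V := W ∪ ⋃ t ∈ T, G.neighborSet t with hR
  have hmemR : ∀ x, x ∈ R ↔ x ∈ W ∨ ∃ t ∈ T, G.Adj t x := by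
    intro x
    simp [hR, SimpleGraph.mem_neighborSet]
  -- facts about any I in the class
  have hTsub : ∀ (I : Set V), I ∩ W = T → T ⊆ I := by
    intro I hIW
    rw [← hIW]; exact Set.inter_subset_left
  have hnotR : ∀ (I : Set V), IsMaximalIndepSet G I → I ∩ W = T →
      ∀ x ∈ I, x ∉ W → x ∈ Rᶜ := by
    intro I hI hIW x hxI hxW
    intro hxR
    rcases (hmemR x).mp hxR with h | ⟨t, htT, hadj⟩
    · exact hxW h
    · exact hI.1 (hTsub I hIW htT) hxI hadj
  have recon : ∀ (I : Set V), IsMaximalIndepSet G I → I ∩ W = T →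
      I = T ∪ (I ∩ Rᶜ) := by
    intro I hI hIW
    apply Set.Subset.antisymm
    · intro x hxI
      by_cases hxW : x ∈ W
      · exact Or.inl (by rw [← hIW]; exact ⟨hxI, hxW⟩)
      · exact Or.inr ⟨hxI, hnotR I hI hIW x hxI hxW⟩
    · intro x hx
      rcases hx with hx | hx
      · exact hTsub I hIW hx
      · exact hx.1
  have key : ∀ (I : Set V), IsMaximalIndepSet G I → I ∩ W = T →
      IsMaximalIndepSet (SimpleGraph.comap (Subtype.val : (Rᶜ : Set V) → V) G)
        (Subtype.val ⁻¹' I) := by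
    intro I hI hIW
    constructor
    · intro a ha b hb hab
      exact hI.1 ha hb hab
    · intro x hx hbad
      -- x.1 ∉ I
      obtain ⟨y, hyI, hadj⟩ := exists_dominator hI hx
      -- y ∉ W: else y ∈ T, then x.1 ∈ R, contra x.2
      have hyW : y ∉ W := by
        intro hyW
        have hyT : y ∈ T := by rw [← hIW]; exact ⟨hyI, hyW⟩
        exact x.2 ((hmemR x.1).mpr (Or.inr ⟨y, hyT, hadj.symm⟩))
      have hyR : y ∈ Rᶜ := hnotR I hI hIW y hyI hyW
      exact hbad (Set.mem_insert x _) (Set.mem_insert_of_mem _ (show (⟨y, hyR⟩ : (Rᶜ : Set V)) ∈ _ from hyI)) hadj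
  apply Nat.card_le_card_of_injective
    (fun I => ⟨Subtype.val ⁻¹' I.1, key I.1 I.2.1 I.2.2⟩)
  intro a b hab
  simp only [Subtype.mk.injEq] at hab
  apply Subtype.ext
  rw [recon a.1 a.2.1 a.2.2, recon b.1 b.2.1 b.2.2]
  have : Subtype.val '' (Subtype.val ⁻¹' a.1 : Set (Rᶜ : Set V))
      = Subtype.val '' (Subtype.val ⁻¹' b.1 : Set (Rᶜ : Set V)) := by rw [hab]
  rw [Subtype.image_preimage_coe, Subtype.image_preimage_coe] at this
  rw [Set.inter_comm, this, Set.inter_comm]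

end Key

section CaseBound

universe u

lemma tf_comap {V : Type*} {V' : Type*} (G : SimpleGraph V) (f : V' → V)
    (hG : ∀ a b c, G.Adj a b → G.Adj a c → G.Adj b c → False) :
    ∀ a b c, (G.comap f).Adj a b → (G.comap f).Adj a c → (G.comap f).Adj b c → False :=
  fun _ _ _ h1 h2 h3 => hG _ _ _ h1 h2 h3

lemma caseBound {V : Type u} [Fintype V] {n : ℕ} (hn : Fintype.card V = n)
    (G : SimpleGraph V)
    (hG : ∀ a b c, G.Adj a b → G.Adj a c → G.Adj b c → False)
    (IH : ∀ (V' : Type u) [Fintype V'] (G' : SimpleGraph V'),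
        Fintype.card V' < n →
        (∀ a b c, G'.Adj a b → G'.Adj a c → G'.Adj b c → False) →
        (Nat.card {I : Set V' // IsMaximalIndepSet G' I} : ℝ)
          ≤ 2 ^ ((Fintype.card V' : ℝ) / 2))
    (W T : Set V) (s : Finset V) (r : ℕ)
    (hs : ↑s ⊆ W ∪ ⋃ t ∈ T, G.neighborSet t)
    (hr1 : 1 ≤ r) (hrs : r ≤ s.card) :
    (Nat.card {I : Set V // IsMaximalIndepSet G I ∧ I ∩ W = T} : ℝ)
      ≤ 2 ^ (((n : ℝ) - r) / 2) := by
  classical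
  set R : Set V := W ∪ ⋃ t ∈ T, G.neighborSet t with hR
  have hcardR : r ≤ Fintype.card R := by
    calc r ≤ s.card := hrs
      _ ≤ R.toFinset.card := Finset.card_le_card
          (fun x hx => Set.mem_toFinset.mpr (hs hx))
      _ = Fintype.card R := Set.toFinset_card R
  have hRn : Fintype.card R ≤ n := by
    rw [← hn]; exact Fintype.card_le_of_injective Subtype.val Subtype.val_injective
  have hcompl : Fintype.card (Rᶜ : Set V) = n - Fintype.card R := by
    rw [← hn]; exact Fintype.card_compl_set R
  have hlt : Fintype.card (Rᶜ : Set V) < n := by omega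
  have hle : (Fintype.card (Rᶜ : Set V) : ℝ) ≤ (n : ℝ) - r := by
    have h1 : Fintype.card (Rᶜ : Set V) + r ≤ n := by omega
    have := (Nat.cast_le (α := ℝ)).mpr h1
    push_cast at this ⊢
    linarith
  calc (Nat.card {I : Set V // IsMaximalIndepSet G I ∧ I ∩ W = T} : ℝ)
      ≤ (Nat.card {J : Set (Rᶜ : Set V) //
          IsMaximalIndepSet (G.comap Subtype.val) J} : ℝ) := by
        exact_mod_cast keyA G W T
    _ ≤ 2 ^ ((Fintype.card (Rᶜ : Set V) : ℝ) / 2) :=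
        IH _ _ hlt (tf_comap G _ hG)
    _ ≤ 2 ^ (((n : ℝ) - r) / 2) :=
        Real.rpow_le_rpow_of_exponent_le one_le_two (by linarith)

end CaseBound

section RealHelpers

lemma g_split (x a : ℝ) : (2 : ℝ) ^ ((x - a) / 2) = 2 ^ (x / 2) * 2 ^ (-(a / 2)) := by
  rw [← Real.rpow_add (by norm_num : (0:ℝ) < 2)]
  ring_nf

lemma g_pos (x : ℝ) : (0 : ℝ) < 2 ^ (x / 2) :=
  Real.rpow_pos_of_pos (by norm_num) _

lemma two_rpow_neg_one : (2 : ℝ) ^ (-(1 : ℝ)) = 1 / 2 := by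
  rw [Real.rpow_neg (by norm_num), Real.rpow_one]; norm_num

lemma two_rpow_neg_two : (2 : ℝ) ^ (-(2 : ℝ)) = 1 / 4 := by
  rw [Real.rpow_neg (by norm_num), show (2:ℝ) = ((2:ℕ):ℝ) by norm_num,
    Real.rpow_natCast]
  norm_num

lemma sqrt_half_sq : (2 : ℝ) ^ (-(1 : ℝ) / 2) * (2 : ℝ) ^ (-(1 : ℝ) / 2) = 1 / 2 := by
  rw [← Real.rpow_add (by norm_num : (0:ℝ) < 2), show (-(1:ℝ)/2 + -(1:ℝ)/2) = -(1:ℝ) by ring]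
  exact two_rpow_neg_one

lemma sqrt_half_le : (2 : ℝ) ^ (-(1 : ℝ) / 2) ≤ 3 / 4 := by
  nlinarith [sqrt_half_sq, Real.rpow_pos_of_pos (by norm_num : (0:ℝ) < 2) (-(1:ℝ)/2)]

end RealHelpers

section GraphHelpers

variable {V : Type*} {G : SimpleGraph V}

lemma deg2_other [Fintype V] [DecidableRel G.Adj] {v u : V}
    (h2 : G.degree v = 2) (hu : G.Adj v u) :
    ∃ w, G.Adj v w ∧ w ≠ u ∧ ∀ y, G.Adj v y → y = u ∨ y = w := by
  classical
  have hcard : (G.neighborFinset v).card = 2 := by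
    rw [G.card_neighborFinset_eq_degree, h2]
  obtain ⟨a, b, hab, hset⟩ := Finset.card_eq_two.mp hcard
  have mem : ∀ y, G.Adj v y ↔ (y = a ∨ y = b) := by
    intro y
    rw [← G.mem_neighborFinset v y, hset]
    simp
  rcases (mem u).mp hu with rfl | rfl
  · exact ⟨b, (mem b).mpr (Or.inr rfl), fun h => hab h.symm, fun y hy => (mem y).mp hy⟩
  · exact ⟨a, (mem a).mpr (Or.inl rfl), fun h => hab h, fun y hy => ((mem y).mp hy).symm⟩

lemma deg1_unique [Fintype V] [DecidableRel G.Adj] {v u : V}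
    (h1 : G.degree v = 1) (hu : G.Adj v u) :
    ∀ y, G.Adj v y → y = u := by
  classical
  have hcard : (G.neighborFinset v).card = 1 := by
    rw [G.card_neighborFinset_eq_degree, h1]
  obtain ⟨a, hset⟩ := Finset.card_eq_one.mp hcard
  have mem : ∀ y, G.Adj v y ↔ y = a := by
    intro y
    rw [← G.mem_neighborFinset v y, hset]
    simp
  intro y hy
  rw [(mem y).mp hy, ← (mem u).mp hu]

lemma inter_eq_of {I W T : Set V} (h1 : T ⊆ I) (h2 : T ⊆ W)
    (h3 : ∀ x, x ∈ W → x ∈ I → x ∈ T) : I ∩ W = T := by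
  apply Set.Subset.antisymm
  · rintro x ⟨hxI, hxW⟩
    exact h3 x hxW hxI
  · exact Set.subset_inter h1 h2

end GraphHelpers

section MoreReal

lemma c_le_one {a : ℝ} (ha : 0 ≤ a) : (2 : ℝ) ^ (-(a) / 2) ≤ 1 := by
  apply Real.rpow_le_one_of_one_le_of_nonpos one_le_two
  linarith

lemma c2' : (2 : ℝ) ^ (-(2 : ℝ) / 2) = 1 / 2 := by
  rw [show (-(2:ℝ)/2) = -(1:ℝ) by norm_num]
  exact two_rpow_neg_one

lemma c3' : (2 : ℝ) ^ (-(3 : ℝ) / 2) = (1 / 2) * (2 : ℝ) ^ (-(1 : ℝ) / 2) := by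
  rw [show (-(3:ℝ)/2) = -(1:ℝ) + (-(1:ℝ)/2) by norm_num, Real.rpow_add (by norm_num : (0:ℝ) < 2),
    two_rpow_neg_one]

lemma c4' : (2 : ℝ) ^ (-(4 : ℝ) / 2) = 1 / 4 := by
  rw [show (-(4:ℝ)/2) = -(2:ℝ) by norm_num]
  exact two_rpow_neg_two

lemma c5' : (2 : ℝ) ^ (-(5 : ℝ) / 2) = (1 / 4) * (2 : ℝ) ^ (-(1 : ℝ) / 2) := by
  rw [show (-(5:ℝ)/2) = -(2:ℝ) + (-(1:ℝ)/2) by norm_num, Real.rpow_add (by norm_num : (0:ℝ) < 2),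
    two_rpow_neg_two]


lemma sqrt_half_le45 : (2 : ℝ) ^ (-(1 : ℝ) / 2) ≤ 4 / 5 := by
  nlinarith [sqrt_half_sq, Real.rpow_pos_of_pos (by norm_num : (0:ℝ) < 2) (-(1:ℝ)/2)]

lemma e1' (x : ℝ) : (2:ℝ) ^ ((x - 1)/2) = 2 ^ (x/2) * 2 ^ (-(1:ℝ)/2) := by
  rw [show (x-1)/2 = x/2 + (-(1:ℝ)/2) by ring, Real.rpow_add (by norm_num : (0:ℝ) < 2)]

lemma e2' (x : ℝ) : (2:ℝ) ^ ((x - 2)/2) = 2 ^ (x/2) * (1/2) := by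
  rw [show (x-2)/2 = x/2 + (-(1:ℝ)) by ring, Real.rpow_add (by norm_num : (0:ℝ) < 2),
    two_rpow_neg_one]

lemma e3' (x : ℝ) : (2:ℝ) ^ ((x - 3)/2) = 2 ^ (x/2) * ((2:ℝ) ^ (-(1:ℝ)/2) * (1/2)) := by
  rw [show (x-3)/2 = x/2 + (-(1:ℝ)/2) + (-(1:ℝ)) by ring,
    Real.rpow_add (by norm_num : (0:ℝ) < 2), Real.rpow_add (by norm_num : (0:ℝ) < 2),
    two_rpow_neg_one]
  ring

lemma e4' (x : ℝ) : (2:ℝ) ^ ((x - 4)/2) = 2 ^ (x/2) * (1/4) := by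
  rw [show (x-4)/2 = x/2 + (-(1:ℝ)) + (-(1:ℝ)) by ring,
    Real.rpow_add (by norm_num : (0:ℝ) < 2), Real.rpow_add (by norm_num : (0:ℝ) < 2),
    two_rpow_neg_one]
  ring

lemma e5' (x : ℝ) : (2:ℝ) ^ ((x - 5)/2) = 2 ^ (x/2) * ((2:ℝ) ^ (-(1:ℝ)/2) * (1/4)) := by
  rw [show (x-5)/2 = x/2 + (-(1:ℝ)/2) + (-(1:ℝ)) + (-(1:ℝ)) by ring,
    Real.rpow_add (by norm_num : (0:ℝ) < 2), Real.rpow_add (by norm_num : (0:ℝ) < 2),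
    Real.rpow_add (by norm_num : (0:ℝ) < 2), two_rpow_neg_one]
  ring

lemma sum_deg0 (x : ℝ) : (2:ℝ) ^ ((x - 1)/2) ≤ 2 ^ (x/2) := by
  rw [e1']
  have h := mul_le_mul_of_nonneg_left sqrt_half_le (le_of_lt (g_pos x))
  have := g_pos x
  linarith

lemma sum_deg1 (x : ℝ) : (2:ℝ) ^ ((x - 2)/2) + (2:ℝ) ^ ((x - 2)/2) ≤ 2 ^ (x/2) := by
  rw [e2']
  have := g_pos x
  linarith

lemma sum_case3 (x : ℝ) :
    (2:ℝ) ^ ((x - 4)/2) + ((2:ℝ) ^ ((x - 4)/2) + (2:ℝ) ^ ((x - 2)/2)) ≤ 2 ^ (x/2) := by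
  rw [e4', e2']
  have := g_pos x
  linarith

lemma sum_case5a (x : ℝ) : (2:ℝ) ^ ((x - 4)/2) + (2:ℝ) ^ ((x - 4)/2) ≤ 2 ^ (x/2) := by
  rw [e4']
  have := g_pos x
  linarith

lemma sum_case5b (x : ℝ) :
    (2:ℝ) ^ ((x - 3)/2) + ((2:ℝ) ^ ((x - 5)/2)
      + ((2:ℝ) ^ ((x - 5)/2) + (2:ℝ) ^ ((x - 5)/2))) ≤ 2 ^ (x/2) := by
  rw [e3', e5']
  have h := mul_le_mul_of_nonneg_left sqrt_half_le45 (le_of_lt (g_pos x))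
  have := g_pos x
  nlinarith

lemma sum_case4 (x α κ : ℝ) (hα : 4 ≤ α) (hκ : 0 ≤ κ) (hκα : κ ≤ α - 1) :
    (2:ℝ) ^ ((x - α)/2) + (2:ℝ) ^ κ * (2:ℝ) ^ ((x - (α + κ))/2) ≤ 2 ^ (x/2) := by
  have key : (2:ℝ) ^ (-α/2) + (2:ℝ) ^ κ * (2:ℝ) ^ (-(α+κ)/2) ≤ 1 := by
    have h2 : (2:ℝ) ^ κ * (2:ℝ) ^ (-(α+κ)/2) = 2 ^ ((κ - α)/2) := by
      rw [← Real.rpow_add (by norm_num : (0:ℝ) < 2)]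
      congr 1
      ring
    rw [h2]
    have h1 : (2:ℝ) ^ (-α/2) ≤ 1/4 := by
      rw [← c4']
      apply Real.rpow_le_rpow_of_exponent_le one_le_two
      linarith
    have h3 : (2:ℝ) ^ ((κ-α)/2) ≤ 2 ^ (-(1:ℝ)/2) := by
      apply Real.rpow_le_rpow_of_exponent_le one_le_two
      linarith
    have := sqrt_half_le
    linarith
  have expand : ∀ a : ℝ, (2:ℝ) ^ ((x - a)/2) = 2 ^ (x/2) * 2 ^ (-a/2) := by
    intro a
    rw [show (x-a)/2 = x/2 + (-a/2) by ring, Real.rpow_add (by norm_num : (0:ℝ) < 2)]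
  rw [expand α, expand (α + κ)]
  have ht := le_of_lt (g_pos x)
  calc 2 ^ (x/2) * 2 ^ (-α/2) + (2:ℝ) ^ κ * (2 ^ (x/2) * 2 ^ (-(α+κ)/2))
      = 2 ^ (x/2) * ((2:ℝ) ^ (-α/2) + (2:ℝ) ^ κ * (2:ℝ) ^ (-(α+κ)/2)) := by ring
    _ ≤ 2 ^ (x/2) * 1 := mul_le_mul_of_nonneg_left key ht
    _ = _ := mul_one _

end MoreReal

section Main

universe u

theorem main_aux (n : ℕ) : ∀ {V : Type u} [Fintype V] (G : SimpleGraph V),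
    Fintype.card V = n →
    (∀ a b c, G.Adj a b → G.Adj a c → G.Adj b c → False) →
    (Nat.card {I : Set V // IsMaximalIndepSet G I} : ℝ) ≤ 2 ^ ((n : ℝ) / 2) := by
  induction n using Nat.strong_induction_on with
  | _ n IH =>
  intro V _inst G hn hG
  classical
  letI : DecidableRel G.Adj := fun a b => Classical.dec _
  have IH' : ∀ (V' : Type u) [Fintype V'] (G' : SimpleGraph V'),
      Fintype.card V' < n →
      (∀ a b c, G'.Adj a b → G'.Adj a c → G'.Adj b c → False) →
      (Nat.card {I : Set V' // IsMaximalIndepSet G' I} : ℝ)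
        ≤ 2 ^ ((Fintype.card V' : ℝ) / 2) := by
    intro V' _ G' hlt hTF
    exact IH _ hlt G' rfl hTF
  have classBound : ∀ (q : Set V → Prop) (W T : Set V) (s : Finset V) (r : ℕ),
      (∀ I : Set V, q I → IsMaximalIndepSet G I ∧ I ∩ W = T) →
      (↑s ⊆ W ∪ ⋃ t ∈ T, G.neighborSet t) → 1 ≤ r → r ≤ s.card →
      (Nat.card {I : Set V // q I} : ℝ) ≤ 2 ^ (((n : ℝ) - r) / 2) := by
    intro q W T s r himp hsub hr1 hrs
    calc (Nat.card {I : Set V // q I} : ℝ)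
        ≤ (Nat.card {I : Set V // IsMaximalIndepSet G I ∧ I ∩ W = T} : ℝ) := by
          exact_mod_cast card_imp (fun I hI => himp I hI)
      _ ≤ _ := caseBound hn G hG IH' W T s r hsub hr1 hrs
  -- base case
  by_cases hn0 : n = 0
  · subst hn0
    have hVempty : IsEmpty V := Fintype.card_eq_zero_iff.mp hn
    have hsub : Subsingleton (Set V) := by
      constructor
      intro a b
      ext x
      exact (hVempty.false x).elim
    have : (Nat.card {I : Set V // IsMaximalIndepSet G I}) ≤ 1 := by
      letI : Fintype {I : Set V // IsMaximalIndepSet G I} := Fintype.ofFinite _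
      rw [Nat.card_eq_fintype_card]
      exact Fintype.card_le_one_iff_subsingleton.mpr inferInstance
    calc (Nat.card {I : Set V // IsMaximalIndepSet G I} : ℝ) ≤ 1 := by exact_mod_cast this
      _ ≤ _ := by norm_num
  · by_cases h0 : ∃ v, G.degree v = 0
    · obtain ⟨v, hv⟩ := h0
      have hnoadj : ∀ y, ¬ G.Adj v y := by
        intro y hy
        have : 0 < G.degree v := (G.degree_pos_iff_exists_adj v).mpr ⟨y, hy⟩
        omega
      have hb : (Nat.card {I : Set V // IsMaximalIndepSet G I} : ℝ)
          ≤ 2 ^ (((n : ℝ) - (1:ℕ)) / 2) := by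
        apply classBound _ ({v} : Set V) ({v} : Set V) ({v} : Finset V) 1
        · intro I hI
          refine ⟨hI, ?_⟩
          have hvI : v ∈ I := by
            by_contra hvI
            obtain ⟨y, _, hadj⟩ := exists_dominator hI hvI
            exact hnoadj y hadj
          exact inter_eq_of (Set.singleton_subset_iff.mpr hvI) (le_refl _)
            (fun x hx _ => hx)
        · intro x hx
          simp only [Finset.coe_singleton, Set.mem_singleton_iff] at hx
          exact Or.inl hx
        · exact le_refl 1
        · simp
      refine le_trans hb ?_
      push_cast
      exact sum_deg0 (n : ℝ)
    · by_cases h1 : ∃ v, G.degree v = 1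
      · obtain ⟨v, hv⟩ := h1
        obtain ⟨u, hu⟩ := (G.degree_pos_iff_exists_adj v).mp (by omega)
        have huniq : ∀ y, G.Adj v y → y = u := deg1_unique hv hu
        have hsplit := card_split (fun I : Set V => IsMaximalIndepSet G I)
          (fun I => v ∈ I)
        have b1 : (Nat.card {I : Set V // IsMaximalIndepSet G I ∧ v ∈ I} : ℝ)
            ≤ 2 ^ (((n : ℝ) - (2:ℕ)) / 2) := by
          apply classBound _ ({v, u} : Set V) ({v} : Set V) ({v, u} : Finset V) 2
          · rintro I ⟨hI, hvI⟩
            refine ⟨hI, inter_eq_of (Set.singleton_subset_iff.mpr hvI)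
              (by intro x hx; exact Or.inl hx) ?_⟩
            rintro x (rfl | rfl) hxI
            · rfl
            · exact absurd hu (hI.1 hvI hxI)
          · intro x hx
            simp only [Finset.coe_insert, Finset.coe_singleton] at hx
            exact Or.inl hx
          · norm_num
          · rw [Finset.card_pair hu.ne]
        have b2 : (Nat.card {I : Set V // IsMaximalIndepSet G I ∧ ¬ v ∈ I} : ℝ)
            ≤ 2 ^ (((n : ℝ) - (2:ℕ)) / 2) := by
          apply classBound _ ({v, u} : Set V) ({u} : Set V) ({v, u} : Finset V) 2
          · rintro I ⟨hI, hvI⟩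
            have huI : u ∈ I := by
              obtain ⟨y, hyI, hadj⟩ := exists_dominator hI hvI
              rwa [← huniq y hadj]
            refine ⟨hI, inter_eq_of (Set.singleton_subset_iff.mpr huI)
              (by intro x hx; exact Or.inr hx) ?_⟩
            rintro x (rfl | rfl) hxI
            · exact absurd hxI hvI
            · rfl
          · intro x hx
            simp only [Finset.coe_insert, Finset.coe_singleton] at hx
            exact Or.inl hx
          · norm_num
          · rw [Finset.card_pair hu.ne]
        have htotal : (Nat.card {I : Set V // IsMaximalIndepSet G I} : ℝ)
            ≤ (Nat.card {I : Set V // IsMaximalIndepSet G I ∧ v ∈ I} : ℝ)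
              + (Nat.card {I : Set V // IsMaximalIndepSet G I ∧ ¬ v ∈ I} : ℝ) := by
          exact_mod_cast hsplit
        have := sum_deg1 (n : ℝ)
        push_cast at b1 b2
        linarith
      · have hmin : ∀ v, 2 ≤ G.degree v := by
          intro v
          have a0 : G.degree v ≠ 0 := fun h => h0 ⟨v, h⟩
          have a1 : G.degree v ≠ 1 := fun h => h1 ⟨v, h⟩
          omega
        by_cases h3 : ∃ x, ∃ y, G.Adj x y ∧ 3 ≤ G.degree x ∧ 3 ≤ G.degree y
        · obtain ⟨x, y, hxy, hdx, hdy⟩ := h3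
          have heavy : ∀ z : V, 3 ≤ G.degree z → ∀ (q : Set V → Prop),
              (∀ I, q I → IsMaximalIndepSet G I ∧ z ∈ I) →
              (Nat.card {I : Set V // q I} : ℝ) ≤ 2 ^ (((n : ℝ) - (4:ℕ)) / 2) := by
            intro z hdz q hq
            apply classBound _ ({z} ∪ G.neighborSet z) ({z} : Set V)
              (insert z (G.neighborFinset z)) 4
            · intro I hI
              obtain ⟨hI, hzI⟩ := hq I hI
              refine ⟨hI, inter_eq_of (Set.singleton_subset_iff.mpr hzI)
                (fun a ha => Or.inl ha) ?_⟩
              rintro a (ha | ha) haI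
              · exact ha
              · exact absurd ((G.mem_neighborSet z a).mp ha) (hI.1 hzI haI)
            · intro a ha
              simp only [Finset.coe_insert, Set.mem_insert_iff, Finset.mem_coe,
                SimpleGraph.mem_neighborFinset] at ha
              rcases ha with rfl | ha
              · exact Or.inl (Or.inl rfl)
              · exact Or.inl (Or.inr ((G.mem_neighborSet z a).mpr ha))
            · norm_num
            · rw [Finset.card_insert_of_notMem (G.notMem_neighborFinset_self z),
                G.card_neighborFinset_eq_degree]
              omega
          have hsplit1 := card_split (fun I : Set V => IsMaximalIndepSet G I)
            (fun I => x ∈ I)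
          have hsplit2 := card_split
            (fun I : Set V => IsMaximalIndepSet G I ∧ ¬ x ∈ I) (fun I => y ∈ I)
          have b1 := heavy x hdx (fun I => IsMaximalIndepSet G I ∧ x ∈ I)
            (fun I hI => hI)
          have b2 := heavy y hdy
            (fun I => (IsMaximalIndepSet G I ∧ ¬ x ∈ I) ∧ y ∈ I)
            (fun I hI => ⟨hI.1.1, hI.2⟩)
          have b3 : (Nat.card {I : Set V //
              (IsMaximalIndepSet G I ∧ ¬ x ∈ I) ∧ ¬ y ∈ I} : ℝ)
              ≤ 2 ^ (((n : ℝ) - (2:ℕ)) / 2) := by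
            apply classBound _ ({x, y} : Set V) (∅ : Set V) ({x, y} : Finset V) 2
            · rintro I ⟨⟨hI, hxI⟩, hyI⟩
              refine ⟨hI, inter_eq_of (Set.empty_subset _) (Set.empty_subset _) ?_⟩
              rintro a (rfl | rfl) haI
              · exact absurd haI hxI
              · exact absurd haI hyI
            · intro a ha
              simp only [Finset.coe_insert, Finset.coe_singleton] at ha
              exact Or.inl ha
            · norm_num
            · rw [Finset.card_pair hxy.ne]
          have hc1 : (Nat.card {I : Set V // IsMaximalIndepSet G I} : ℝ)
              ≤ (Nat.card {I : Set V // IsMaximalIndepSet G I ∧ x ∈ I} : ℝ)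
                + (Nat.card {I : Set V // IsMaximalIndepSet G I ∧ ¬ x ∈ I} : ℝ) := by
            exact_mod_cast hsplit1
          have hc2 : (Nat.card {I : Set V // IsMaximalIndepSet G I ∧ ¬ x ∈ I} : ℝ)
              ≤ (Nat.card {I : Set V //
                  (IsMaximalIndepSet G I ∧ ¬ x ∈ I) ∧ y ∈ I} : ℝ)
                + (Nat.card {I : Set V //
                  (IsMaximalIndepSet G I ∧ ¬ x ∈ I) ∧ ¬ y ∈ I} : ℝ) := by
            exact_mod_cast hsplit2
          have := sum_case3 (n : ℝ)
          push_cast at b1 b2 b3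
          linarith
        · by_cases h4 : ∃ u, 3 ≤ G.degree u
          · obtain ⟨u, hd3⟩ := h4
            have hnbr2 : ∀ z, G.Adj u z → G.degree z = 2 := by
              intro z hz
              have h2 := hmin z
              have h3' : ¬ 3 ≤ G.degree z := fun hzz => h3 ⟨u, z, hz, hd3, hzz⟩
              omega
            have hwex : ∀ z, ∃ w, G.Adj u z →
                (G.Adj z w ∧ w ≠ u ∧ ∀ y, G.Adj z y → y = u ∨ y = w) := by
              intro z
              by_cases hz : G.Adj u z
              · obtain ⟨w, hw⟩ := deg2_other (hnbr2 z hz) hz.symm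
                exact ⟨w, fun _ => hw⟩
              · exact ⟨u, fun hz' => absurd hz' hz⟩
            choose w hwspec using hwex
            have hwadj : ∀ z, G.Adj u z → G.Adj z (w z) := fun z hz => (hwspec z hz).1
            have hwne : ∀ z, G.Adj u z → w z ≠ u := fun z hz => (hwspec z hz).2.1
            have hwnbrs : ∀ z, G.Adj u z → ∀ y, G.Adj z y → y = u ∨ y = w z :=
              fun z hz => (hwspec z hz).2.2
            have hwout : ∀ z, G.Adj u z → ¬ G.Adj u (w z) := by
              intro z hz hadj
              exact hG u z (w z) hz hadj (hwadj z hz)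
            set WA : Finset V := (G.neighborFinset u).image w with hWA
            set k : ℕ := WA.card with hk
            set d : ℕ := G.degree u with hd
            have hkd : k ≤ d := by
              rw [hk, hd, ← G.card_neighborFinset_eq_degree]
              exact Finset.card_image_le
            have hWAmem : ∀ x, x ∈ WA → ∃ z, G.Adj u z ∧ w z = x := by
              intro x hx
              rw [hWA] at hx
              obtain ⟨z, hz, hzx⟩ := Finset.mem_image.mp hx
              exact ⟨z, (G.mem_neighborFinset u z).mp hz, hzx⟩
            have hwWA : ∀ z, G.Adj u z → w z ∈ WA := by
              intro z hz
              rw [hWA]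
              exact Finset.mem_image_of_mem w ((G.mem_neighborFinset u z).mpr hz)
            have hWAnadj : ∀ x, x ∈ WA → x ≠ u ∧ ¬ G.Adj u x := by
              intro x hx
              obtain ⟨z, hz, hzx⟩ := hWAmem x hx
              exact ⟨hzx ▸ hwne z hz, hzx ▸ hwout z hz⟩
            have hdisj : Disjoint (insert u (G.neighborFinset u)) WA := by
              rw [Finset.disjoint_right]
              intro x hx hx'
              obtain ⟨hne, hnadj⟩ := hWAnadj x hx
              rcases Finset.mem_insert.mp hx' with rfl | hxn
              · exact hne rfl
              · exact hnadj ((G.mem_neighborFinset u x).mp hxn)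
            have hscard : (insert u (G.neighborFinset u) ∪ WA).card = d + 1 + k := by
              rw [Finset.card_union_of_disjoint hdisj,
                Finset.card_insert_of_notMem (G.notMem_neighborFinset_self u),
                G.card_neighborFinset_eq_degree]
            set Wset : Set V := ({u} ∪ G.neighborSet u) ∪ ↑WA with hWset
            have hsWset : (↑(insert u (G.neighborFinset u) ∪ WA) : Set V) ⊆ Wset := by
              intro a ha
              simp only [Finset.coe_union, Set.mem_union, Finset.coe_insert,
                Set.mem_insert_iff, Finset.mem_coe] at ha
              rcases ha with (rfl | ha) | ha
              · exact Or.inl (Or.inl rfl)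
              · exact Or.inl (Or.inr ((G.mem_neighborSet u a).mpr
                  ((G.mem_neighborFinset u a).mp ha)))
              · exact Or.inr ha
            -- class u ∈ I
            have bu : (Nat.card {I : Set V // IsMaximalIndepSet G I ∧ u ∈ I} : ℝ)
                ≤ 2 ^ (((n : ℝ) - (d + 1 : ℕ)) / 2) := by
              apply classBound _ ({u} ∪ G.neighborSet u) ({u} : Set V)
                (insert u (G.neighborFinset u)) (d + 1)
              · rintro I ⟨hI, huI⟩
                refine ⟨hI, inter_eq_of (Set.singleton_subset_iff.mpr huI)
                  (fun a ha => Or.inl ha) ?_⟩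
                rintro a (ha | ha) haI
                · exact ha
                · exact absurd ((G.mem_neighborSet u a).mp ha) (hI.1 huI haI)
              · intro a ha
                simp only [Finset.coe_insert, Set.mem_insert_iff, Finset.mem_coe] at ha
                rcases ha with rfl | ha
                · exact Or.inl (Or.inl rfl)
                · exact Or.inl (Or.inr ((G.mem_neighborSet u a).mpr
                    ((G.mem_neighborFinset u a).mp ha)))
              · omega
              · rw [Finset.card_insert_of_notMem (G.notMem_neighborFinset_self u),
                  G.card_neighborFinset_eq_degree]
            -- class u ∉ I, fibered over the trace on WA
            have hufiber : (Nat.card {I : Set V //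
                IsMaximalIndepSet G I ∧ ¬ u ∈ I} : ℝ)
                ≤ (2 : ℝ) ^ (k : ℕ) * 2 ^ (((n : ℝ) - (d + 1 + k : ℕ)) / 2) := by
              set c : Set V → Finset {x // x ∈ WA} :=
                fun I => Finset.univ.filter (fun x => (x : V) ∈ I) with hc
              have hfib := card_fiber
                (fun J : {I : Set V // IsMaximalIndepSet G I ∧ ¬ u ∈ I} => c J.1)
              have hper : ∀ B : Finset {x // x ∈ WA},
                  (Nat.card {J : {I : Set V // IsMaximalIndepSet G I ∧ ¬ u ∈ I} //
                    c J.1 = B} : ℝ) ≤ 2 ^ (((n : ℝ) - (d + 1 + k : ℕ)) / 2) := by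
                intro B
                set SB : Set V := (fun x : {x // x ∈ WA} => (x : V)) '' ↑B with hSB
                set TB : Set V := {z : V | G.Adj u z ∧ ¬ w z ∈ SB} ∪ SB with hTB
                have hSBWA : SB ⊆ ↑WA := by
                  rintro x ⟨q, _, rfl⟩
                  exact q.2
                have step1 : Nat.card {J : {I : Set V //
                    IsMaximalIndepSet G I ∧ ¬ u ∈ I} // c J.1 = B}
                    ≤ Nat.card {I : Set V //
                      (IsMaximalIndepSet G I ∧ ¬ u ∈ I) ∧ c I = B} :=
                  card_subfiber _ _ _
                have step2 : (Nat.card {I : Set V //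
                    (IsMaximalIndepSet G I ∧ ¬ u ∈ I) ∧ c I = B} : ℝ)
                    ≤ 2 ^ (((n : ℝ) - (d + 1 + k : ℕ)) / 2) := by
                  apply classBound _ Wset TB
                    (insert u (G.neighborFinset u) ∪ WA) (d + 1 + k)
                  · rintro I ⟨⟨hI, huI⟩, hcI⟩
                    have hSBI : ∀ x, x ∈ WA → (x ∈ SB ↔ x ∈ I) := by
                      intro x hx
                      constructor
                      · rintro ⟨q, hqB, rfl⟩
                        have hq : q ∈ c I := by rw [hcI]; exact hqB
                        exact (Finset.mem_filter.mp hq).2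
                      · intro hxI
                        refine ⟨⟨x, hx⟩, ?_, rfl⟩
                        have : (⟨x, hx⟩ : {x // x ∈ WA}) ∈ c I :=
                          Finset.mem_filter.mpr ⟨Finset.mem_univ _, hxI⟩
                        rw [hcI] at this
                        exact this
                    have hzI : ∀ z, G.Adj u z → (z ∈ I ↔ ¬ w z ∈ I) := by
                      intro z hz
                      constructor
                      · intro hzmem hwmem
                        exact hI.1 hzmem hwmem (hwadj z hz)
                      · intro hwmem
                        by_contra hzmem
                        obtain ⟨y, hyI, hadj⟩ := exists_dominator hI hzmem
                        rcases hwnbrs z hz y hadj with rfl | rfl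
                        · exact huI hyI
                        · exact hwmem hyI
                    refine ⟨hI, inter_eq_of ?_ ?_ ?_⟩
                    · rintro x (⟨hadj, hwx⟩ | hxSB)
                      · refine (hzI x hadj).mpr ?_
                        intro hwI
                        exact hwx ((hSBI (w x) (hwWA x hadj)).mpr hwI)
                      · exact (hSBI x (hSBWA hxSB)).mp hxSB
                    · rintro x (⟨hadj, _⟩ | hxSB)
                      · exact Or.inl (Or.inr ((G.mem_neighborSet u x).mpr hadj))
                      · exact Or.inr (hSBWA hxSB)
                    · rintro x ((rfl | hxN) | hxWA) hxI
                      · exact absurd hxI huI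
                      · have hadj := (G.mem_neighborSet u x).mp hxN
                        refine Or.inl ⟨hadj, ?_⟩
                        intro hwSB
                        exact ((hzI x hadj).mp hxI)
                          ((hSBI (w x) (hwWA x hadj)).mp hwSB)
                      · exact Or.inr ((hSBI x hxWA).mpr hxI)
                  · intro a ha
                    exact Or.inl (hsWset ha)
                  · omega
                  · rw [hscard]
                calc (Nat.card {J : {I : Set V //
                    IsMaximalIndepSet G I ∧ ¬ u ∈ I} // c J.1 = B} : ℝ)
                    ≤ (Nat.card {I : Set V //
                      (IsMaximalIndepSet G I ∧ ¬ u ∈ I) ∧ c I = B} : ℝ) := by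
                      exact_mod_cast step1
                  _ ≤ _ := step2
              calc (Nat.card {I : Set V // IsMaximalIndepSet G I ∧ ¬ u ∈ I} : ℝ)
                  = ∑ B : Finset {x // x ∈ WA},
                    (Nat.card {J : {I : Set V //
                      IsMaximalIndepSet G I ∧ ¬ u ∈ I} // c J.1 = B} : ℝ) := by
                    exact_mod_cast hfib
                _ ≤ ∑ _B : Finset {x // x ∈ WA},
                    (2 : ℝ) ^ (((n : ℝ) - (d + 1 + k : ℕ)) / 2) :=
                    Finset.sum_le_sum (fun B _ => hper B)
                _ = (Fintype.card (Finset {x // x ∈ WA}) : ℝ)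
                    * 2 ^ (((n : ℝ) - (d + 1 + k : ℕ)) / 2) := by
                    rw [Finset.sum_const, Finset.card_univ, nsmul_eq_mul]
                _ = (2 : ℝ) ^ (k : ℕ) * 2 ^ (((n : ℝ) - (d + 1 + k : ℕ)) / 2) := by
                    rw [Fintype.card_finset, Fintype.card_coe, ← hk]
                    push_cast
                    ring
            -- combine
            have hsplitu := card_split (fun I : Set V => IsMaximalIndepSet G I)
              (fun I => u ∈ I)
            have hc1 : (Nat.card {I : Set V // IsMaximalIndepSet G I} : ℝ)
                ≤ (Nat.card {I : Set V // IsMaximalIndepSet G I ∧ u ∈ I} : ℝ)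
                  + (Nat.card {I : Set V //
                      IsMaximalIndepSet G I ∧ ¬ u ∈ I} : ℝ) := by
              exact_mod_cast hsplitu
            have harith := sum_case4 (n : ℝ) ((d : ℝ) + 1) (k : ℝ)
              (by have : 3 ≤ (d:ℝ) := by exact_mod_cast hd3
                  linarith)
              (by positivity)
              (by have : (k:ℝ) ≤ (d:ℝ) := by exact_mod_cast hkd
                  linarith)
            rw [← Real.rpow_natCast (2 : ℝ) k] at hufiber
            push_cast at bu hufiber
            push_cast at harith
            linarith
          · -- all degrees exactly 2
            have h2all : ∀ v, G.degree v = 2 := by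
              intro v
              have ha := hmin v
              have hb : ¬ 3 ≤ G.degree v := fun h => h4 ⟨v, h⟩
              omega
            have hne : Nonempty V := Fintype.card_pos_iff.mp (by omega)
            obtain ⟨v⟩ := hne
            obtain ⟨u1, hu1⟩ := (G.degree_pos_iff_exists_adj v).mp
              (by rw [h2all v]; omega)
            obtain ⟨u2, hu2, hu2ne, hvnbrs⟩ := deg2_other (h2all v) hu1
            have hu12adj : ¬ G.Adj u1 u2 := fun h => hG v u1 u2 hu1 hu2 h
            obtain ⟨w1, hw1, hw1v, hu1nbrs⟩ := deg2_other (h2all u1) hu1.symm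
            obtain ⟨w2, hw2, hw2v, hu2nbrs⟩ := deg2_other (h2all u2) hu2.symm
            have hvu1 : v ≠ u1 := hu1.ne
            have hvu2 : v ≠ u2 := hu2.ne
            have hu1u2 : u1 ≠ u2 := Ne.symm hu2ne
            have hvw1 : v ≠ w1 := Ne.symm hw1v
            have hvw2 : v ≠ w2 := Ne.symm hw2v
            have hu1w1 : u1 ≠ w1 := hw1.ne
            have hu2w2 : u2 ≠ w2 := hw2.ne
            have hu2w1 : u2 ≠ w1 := fun h => hu12adj (by rw [h]; exact hw1)
            have hu1w2 : u1 ≠ w2 := fun h => hu12adj (by rw [h]; exact hw2.symm)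
            -- splits
            have hsplitv := card_split (fun I : Set V => IsMaximalIndepSet G I)
              (fun I => v ∈ I)
            have hsplitu1 := card_split
              (fun I : Set V => IsMaximalIndepSet G I ∧ ¬ v ∈ I) (fun I => u1 ∈ I)
            have hsplita := card_split
              (fun I : Set V => (IsMaximalIndepSet G I ∧ ¬ v ∈ I) ∧ u1 ∈ I)
              (fun I => u2 ∈ I)
            have hsplitb := card_split
              (fun I : Set V => (IsMaximalIndepSet G I ∧ ¬ v ∈ I) ∧ ¬ u1 ∈ I)
              (fun I => u2 ∈ I)
            have hB00 : Nat.card {I : Set V //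
                ((IsMaximalIndepSet G I ∧ ¬ v ∈ I) ∧ ¬ u1 ∈ I) ∧ ¬ u2 ∈ I} = 0 := by
              apply card_zero
              rintro I ⟨⟨⟨hI, hv⟩, h1⟩, h2⟩
              obtain ⟨y, hyI, hadj⟩ := exists_dominator hI hv
              rcases hvnbrs y hadj with rfl | rfl
              · exact h1 hyI
              · exact h2 hyI
            by_cases hww : w1 = w2
            · -- C4 case
              have hw2' : G.Adj u2 w1 := by rw [hww]; exact hw2
              have hu2nbrs' : ∀ y, G.Adj u2 y → y = v ∨ y = w1 := by
                intro y hy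
                rcases hu2nbrs y hy with h | h
                · exact Or.inl h
                · exact Or.inr (by rw [h, ← hww])
              have hwnbrs : ∀ y, G.Adj w1 y → y = u1 ∨ y = u2 := by
                obtain ⟨w', hw', hw'u1, hnb⟩ := deg2_other (h2all w1) hw1.symm
                have hu2w' : u2 = w' := by
                  rcases hnb u2 hw2'.symm with h | h
                  · exact absurd h hu2ne
                  · exact h
                intro y hy
                rcases hnb y hy with h | h
                · exact Or.inl h
                · exact Or.inr (by rw [h, hu2w'])
              have hcard4 : ({v, u1, u2, w1} : Finset V).card = 4 := by
                rw [Finset.card_insert_of_notMem (by simp [hvu1, hvu2, hvw1]),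
                  Finset.card_insert_of_notMem (by simp [hu1u2, hu1w1]),
                  Finset.card_pair hu2w1]
              have bA : (Nat.card {I : Set V //
                  IsMaximalIndepSet G I ∧ v ∈ I} : ℝ)
                  ≤ 2 ^ (((n : ℝ) - (4:ℕ)) / 2) := by
                apply classBound _ ({v, u1, u2, w1} : Set V) ({v, w1} : Set V)
                  ({v, u1, u2, w1} : Finset V) 4
                · rintro I ⟨hI, hvI⟩
                  have hu1I : u1 ∉ I := fun h => hI.1 hvI h hu1
                  have hu2I : u2 ∉ I := fun h => hI.1 hvI h hu2
                  have hwI : w1 ∈ I := by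
                    by_contra hwI
                    obtain ⟨y, hyI, hadj⟩ := exists_dominator hI hwI
                    rcases hwnbrs y hadj with rfl | rfl
                    · exact hu1I hyI
                    · exact hu2I hyI
                  refine ⟨hI, inter_eq_of ?_ ?_ ?_⟩
                  · rintro a (rfl | rfl)
                    · exact hvI
                    · exact hwI
                  · rintro a (rfl | rfl) <;> simp
                  · rintro a (rfl | rfl | rfl | rfl) haI
                    · exact Or.inl rfl
                    · exact absurd haI hu1I
                    · exact absurd haI hu2I
                    · exact Or.inr rfl
                · intro a ha
                  simp only [Finset.coe_insert, Finset.coe_singleton] at ha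
                  exact Or.inl ha
                · norm_num
                · rw [hcard4]
              have bB11 : (Nat.card {I : Set V //
                  ((IsMaximalIndepSet G I ∧ ¬ v ∈ I) ∧ u1 ∈ I) ∧ u2 ∈ I} : ℝ)
                  ≤ 2 ^ (((n : ℝ) - (4:ℕ)) / 2) := by
                apply classBound _ ({v, u1, u2} : Set V) ({u1, u2} : Set V)
                  ({v, u1, u2, w1} : Finset V) 4
                · rintro I ⟨⟨⟨hI, hvI⟩, h1I⟩, h2I⟩
                  refine ⟨hI, inter_eq_of ?_ ?_ ?_⟩
                  · rintro a (rfl | rfl)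
                    · exact h1I
                    · exact h2I
                  · rintro a (rfl | rfl) <;> simp
                  · rintro a (rfl | rfl | rfl) haI
                    · exact absurd haI hvI
                    · exact Or.inl rfl
                    · exact Or.inr rfl
                · intro a ha
                  simp only [Finset.coe_insert, Finset.coe_singleton] at ha
                  rcases ha with rfl | rfl | rfl | rfl
                  · exact Or.inl (Or.inl rfl)
                  · exact Or.inl (Or.inr (Or.inl rfl))
                  · exact Or.inl (Or.inr (Or.inr rfl))
                  · exact Or.inr (Set.mem_biUnion (Or.inl rfl)
                      ((G.mem_neighborSet u1 _).mpr hw1))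
                · norm_num
                · rw [hcard4]
              have hB10 : Nat.card {I : Set V //
                  ((IsMaximalIndepSet G I ∧ ¬ v ∈ I) ∧ u1 ∈ I) ∧ ¬ u2 ∈ I} = 0 := by
                apply card_zero
                rintro I ⟨⟨⟨hI, hvI⟩, h1I⟩, h2I⟩
                obtain ⟨y, hyI, hadj⟩ := exists_dominator hI h2I
                rcases hu2nbrs' y hadj with rfl | rfl
                · exact hvI hyI
                · exact hI.1 h1I hyI hw1
              have hB01 : Nat.card {I : Set V //
                  ((IsMaximalIndepSet G I ∧ ¬ v ∈ I) ∧ ¬ u1 ∈ I) ∧ u2 ∈ I} = 0 := by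
                apply card_zero
                rintro I ⟨⟨⟨hI, hvI⟩, h1I⟩, h2I⟩
                obtain ⟨y, hyI, hadj⟩ := exists_dominator hI h1I
                rcases hu1nbrs y hadj with rfl | rfl
                · exact hvI hyI
                · exact hI.1 h2I hyI hw2'
              have hc1 : (Nat.card {I : Set V // IsMaximalIndepSet G I} : ℝ)
                  ≤ (Nat.card {I : Set V // IsMaximalIndepSet G I ∧ v ∈ I} : ℝ)
                    + (Nat.card {I : Set V //
                        IsMaximalIndepSet G I ∧ ¬ v ∈ I} : ℝ) := by
                exact_mod_cast hsplitv
              have hc2 : (Nat.card {I : Set V //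
                  IsMaximalIndepSet G I ∧ ¬ v ∈ I} : ℝ)
                  ≤ (Nat.card {I : Set V //
                      (IsMaximalIndepSet G I ∧ ¬ v ∈ I) ∧ u1 ∈ I} : ℝ)
                    + (Nat.card {I : Set V //
                      (IsMaximalIndepSet G I ∧ ¬ v ∈ I) ∧ ¬ u1 ∈ I} : ℝ) := by
                exact_mod_cast hsplitu1
              have hc3 : (Nat.card {I : Set V //
                  (IsMaximalIndepSet G I ∧ ¬ v ∈ I) ∧ u1 ∈ I} : ℝ)
                  ≤ (Nat.card {I : Set V //
                      ((IsMaximalIndepSet G I ∧ ¬ v ∈ I) ∧ u1 ∈ I) ∧ u2 ∈ I} : ℝ)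
                    + (Nat.card {I : Set V //
                      ((IsMaximalIndepSet G I ∧ ¬ v ∈ I) ∧ u1 ∈ I) ∧ ¬ u2 ∈ I} : ℝ) := by
                exact_mod_cast hsplita
              have hc4 : (Nat.card {I : Set V //
                  (IsMaximalIndepSet G I ∧ ¬ v ∈ I) ∧ ¬ u1 ∈ I} : ℝ)
                  ≤ (Nat.card {I : Set V //
                      ((IsMaximalIndepSet G I ∧ ¬ v ∈ I) ∧ ¬ u1 ∈ I) ∧ u2 ∈ I} : ℝ)
                    + (Nat.card {I : Set V //
                      ((IsMaximalIndepSet G I ∧ ¬ v ∈ I) ∧ ¬ u1 ∈ I) ∧ ¬ u2 ∈ I} : ℝ) := by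
                exact_mod_cast hsplitb
              have hz1 : (Nat.card {I : Set V //
                  ((IsMaximalIndepSet G I ∧ ¬ v ∈ I) ∧ u1 ∈ I) ∧ ¬ u2 ∈ I} : ℝ) = 0 := by
                exact_mod_cast hB10
              have hz2 : (Nat.card {I : Set V //
                  ((IsMaximalIndepSet G I ∧ ¬ v ∈ I) ∧ ¬ u1 ∈ I) ∧ u2 ∈ I} : ℝ) = 0 := by
                exact_mod_cast hB01
              have hz3 : (Nat.card {I : Set V //
                  ((IsMaximalIndepSet G I ∧ ¬ v ∈ I) ∧ ¬ u1 ∈ I) ∧ ¬ u2 ∈ I} : ℝ) = 0 := by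
                exact_mod_cast hB00
              have := sum_case5a (n : ℝ)
              push_cast at bA bB11
              linarith
            · -- w1 ≠ w2
              have hcard3 : ({v, u1, u2} : Finset V).card = 3 := by
                rw [Finset.card_insert_of_notMem (by simp [hvu1, hvu2]),
                  Finset.card_pair hu1u2]
              have hcard5 : ({v, u1, u2, w1, w2} : Finset V).card = 5 := by
                rw [Finset.card_insert_of_notMem (by simp [hvu1, hvu2, hvw1, hvw2]),
                  Finset.card_insert_of_notMem (by simp [hu1u2, hu1w1, hu1w2]),
                  Finset.card_insert_of_notMem (by simp [hu2w1, hu2w2]),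
                  Finset.card_pair hww]
              have hsub5 : ∀ (W : Set V), ({v, u1, u2} : Set V) ⊆ W →
                  ∀ (T : Set V), (u1 ∈ T ∨ w1 ∈ W) → (u2 ∈ T ∨ w2 ∈ W) →
                  (↑({v, u1, u2, w1, w2} : Finset V) : Set V)
                    ⊆ W ∪ ⋃ t ∈ T, G.neighborSet t := by
                intro W hW T h1 h2
                intro a ha
                simp only [Finset.coe_insert, Finset.coe_singleton] at ha
                rcases ha with rfl | rfl | rfl | rfl | rfl
                · exact Or.inl (hW (Or.inl rfl))
                · exact Or.inl (hW (Or.inr (Or.inl rfl)))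
                · exact Or.inl (hW (Or.inr (Or.inr rfl)))
                · rcases h1 with h | h
                  · exact Or.inr (Set.mem_biUnion h ((G.mem_neighborSet u1 _).mpr hw1))
                  · exact Or.inl h
                · rcases h2 with h | h
                  · exact Or.inr (Set.mem_biUnion h ((G.mem_neighborSet u2 _).mpr hw2))
                  · exact Or.inl h
              have hWsub1 : ({v, u1, u2} : Set V) ⊆ ({v, u1, u2} : Set V) :=
                fun a ha => ha
              have hWsub2 : ({v, u1, u2} : Set V) ⊆ ({v, u1, u2, w2} : Set V) := by
                rintro a (rfl | rfl | rfl)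
                · exact Or.inl rfl
                · exact Or.inr (Or.inl rfl)
                · exact Or.inr (Or.inr (Or.inl rfl))
              have hWsub3 : ({v, u1, u2} : Set V) ⊆ ({v, u1, u2, w1} : Set V) := by
                rintro a (rfl | rfl | rfl)
                · exact Or.inl rfl
                · exact Or.inr (Or.inl rfl)
                · exact Or.inr (Or.inr (Or.inl rfl))
              have bA : (Nat.card {I : Set V //
                  IsMaximalIndepSet G I ∧ v ∈ I} : ℝ)
                  ≤ 2 ^ (((n : ℝ) - (3:ℕ)) / 2) := by
                apply classBound _ ({v, u1, u2} : Set V) ({v} : Set V)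
                  ({v, u1, u2} : Finset V) 3
                · rintro I ⟨hI, hvI⟩
                  refine ⟨hI, inter_eq_of (Set.singleton_subset_iff.mpr hvI)
                    (by intro a ha; exact Or.inl ha) ?_⟩
                  rintro a (rfl | rfl | rfl) haI
                  · rfl
                  · exact absurd hu1 (hI.1 hvI haI)
                  · exact absurd hu2 (hI.1 hvI haI)
                · intro a ha
                  simp only [Finset.coe_insert, Finset.coe_singleton] at ha
                  exact Or.inl ha
                · norm_num
                · rw [hcard3]
              have bB11 : (Nat.card {I : Set V //
                  ((IsMaximalIndepSet G I ∧ ¬ v ∈ I) ∧ u1 ∈ I) ∧ u2 ∈ I} : ℝ)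
                  ≤ 2 ^ (((n : ℝ) - (5:ℕ)) / 2) := by
                apply classBound _ ({v, u1, u2} : Set V) ({u1, u2} : Set V)
                  ({v, u1, u2, w1, w2} : Finset V) 5
                · rintro I ⟨⟨⟨hI, hvI⟩, h1I⟩, h2I⟩
                  refine ⟨hI, inter_eq_of ?_ ?_ ?_⟩
                  · rintro a (rfl | rfl)
                    · exact h1I
                    · exact h2I
                  · rintro a (rfl | rfl) <;> simp
                  · rintro a (rfl | rfl | rfl) haI
                    · exact absurd haI hvI
                    · exact Or.inl rfl
                    · exact Or.inr rfl
                · exact hsub5 ({v, u1, u2} : Set V) hWsub1 ({u1, u2} : Set V)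
                    (Or.inl (Or.inl rfl)) (Or.inl (Or.inr rfl))
                · norm_num
                · rw [hcard5]
              have bB10 : (Nat.card {I : Set V //
                  ((IsMaximalIndepSet G I ∧ ¬ v ∈ I) ∧ u1 ∈ I) ∧ ¬ u2 ∈ I} : ℝ)
                  ≤ 2 ^ (((n : ℝ) - (5:ℕ)) / 2) := by
                apply classBound _ ({v, u1, u2, w2} : Set V) ({u1, w2} : Set V)
                  ({v, u1, u2, w1, w2} : Finset V) 5
                · rintro I ⟨⟨⟨hI, hvI⟩, h1I⟩, h2I⟩
                  have hw2I : w2 ∈ I := by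
                    obtain ⟨y, hyI, hadj⟩ := exists_dominator hI h2I
                    rcases hu2nbrs y hadj with rfl | rfl
                    · exact absurd hyI hvI
                    · exact hyI
                  refine ⟨hI, inter_eq_of ?_ ?_ ?_⟩
                  · rintro a (rfl | rfl)
                    · exact h1I
                    · exact hw2I
                  · rintro a (rfl | rfl) <;> simp
                  · rintro a (rfl | rfl | rfl | rfl) haI
                    · exact absurd haI hvI
                    · exact Or.inl rfl
                    · exact absurd haI h2I
                    · exact Or.inr rfl
                · exact hsub5 ({v, u1, u2, w2} : Set V) hWsub2 ({u1, w2} : Set V)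
                    (Or.inl (Or.inl rfl)) (Or.inr (Or.inr (Or.inr (Or.inr rfl))))
                · norm_num
                · rw [hcard5]
              have bB01 : (Nat.card {I : Set V //
                  ((IsMaximalIndepSet G I ∧ ¬ v ∈ I) ∧ ¬ u1 ∈ I) ∧ u2 ∈ I} : ℝ)
                  ≤ 2 ^ (((n : ℝ) - (5:ℕ)) / 2) := by
                apply classBound _ ({v, u1, u2, w1} : Set V) ({u2, w1} : Set V)
                  ({v, u1, u2, w1, w2} : Finset V) 5
                · rintro I ⟨⟨⟨hI, hvI⟩, h1I⟩, h2I⟩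
                  have hw1I : w1 ∈ I := by
                    obtain ⟨y, hyI, hadj⟩ := exists_dominator hI h1I
                    rcases hu1nbrs y hadj with rfl | rfl
                    · exact absurd hyI hvI
                    · exact hyI
                  refine ⟨hI, inter_eq_of ?_ ?_ ?_⟩
                  · rintro a (rfl | rfl)
                    · exact h2I
                    · exact hw1I
                  · rintro a (rfl | rfl) <;> simp
                  · rintro a (rfl | rfl | rfl | rfl) haI
                    · exact absurd haI hvI
                    · exact absurd haI h1I
                    · exact Or.inl rfl
                    · exact Or.inr rfl
                · exact hsub5 ({v, u1, u2, w1} : Set V) hWsub3 ({u2, w1} : Set V)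
                    (Or.inr (Or.inr (Or.inr (Or.inr rfl)))) (Or.inl (Or.inl rfl))
                · norm_num
                · rw [hcard5]
              have hc1 : (Nat.card {I : Set V // IsMaximalIndepSet G I} : ℝ)
                  ≤ (Nat.card {I : Set V // IsMaximalIndepSet G I ∧ v ∈ I} : ℝ)
                    + (Nat.card {I : Set V //
                        IsMaximalIndepSet G I ∧ ¬ v ∈ I} : ℝ) := by
                exact_mod_cast hsplitv
              have hc2 : (Nat.card {I : Set V //
                  IsMaximalIndepSet G I ∧ ¬ v ∈ I} : ℝ)
                  ≤ (Nat.card {I : Set V //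
                      (IsMaximalIndepSet G I ∧ ¬ v ∈ I) ∧ u1 ∈ I} : ℝ)
                    + (Nat.card {I : Set V //
                      (IsMaximalIndepSet G I ∧ ¬ v ∈ I) ∧ ¬ u1 ∈ I} : ℝ) := by
                exact_mod_cast hsplitu1
              have hc3 : (Nat.card {I : Set V //
                  (IsMaximalIndepSet G I ∧ ¬ v ∈ I) ∧ u1 ∈ I} : ℝ)
                  ≤ (Nat.card {I : Set V //
                      ((IsMaximalIndepSet G I ∧ ¬ v ∈ I) ∧ u1 ∈ I) ∧ u2 ∈ I} : ℝ)
                    + (Nat.card {I : Set V //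
                      ((IsMaximalIndepSet G I ∧ ¬ v ∈ I) ∧ u1 ∈ I) ∧ ¬ u2 ∈ I} : ℝ) := by
                exact_mod_cast hsplita
              have hc4 : (Nat.card {I : Set V //
                  (IsMaximalIndepSet G I ∧ ¬ v ∈ I) ∧ ¬ u1 ∈ I} : ℝ)
                  ≤ (Nat.card {I : Set V //
                      ((IsMaximalIndepSet G I ∧ ¬ v ∈ I) ∧ ¬ u1 ∈ I) ∧ u2 ∈ I} : ℝ)
                    + (Nat.card {I : Set V //
                      ((IsMaximalIndepSet G I ∧ ¬ v ∈ I) ∧ ¬ u1 ∈ I) ∧ ¬ u2 ∈ I} : ℝ) := by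
                exact_mod_cast hsplitb
              have hz3 : (Nat.card {I : Set V //
                  ((IsMaximalIndepSet G I ∧ ¬ v ∈ I) ∧ ¬ u1 ∈ I) ∧ ¬ u2 ∈ I} : ℝ) = 0 := by
                exact_mod_cast hB00
              have := sum_case5b (n : ℝ)
              push_cast at bA bB11 bB10 bB01
              linarith

end Main

/-- Hujter–Tuza: every triangle-free graph on `m` vertices has at most `2 ^ (m/2)`
maximal independent sets. -/
theorem hujter_tuza {V : Type*} [Fintype V] (G : SimpleGraph V) (hG : G.CliqueFree 3) :
    (Nat.card {I : Set V // IsMaximalIndepSet G I} : ℝ)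
      ≤ 2 ^ ((Fintype.card V : ℝ) / 2) := by
  classical
  have hTF : ∀ a b c, G.Adj a b → G.Adj a c → G.Adj b c → False := by
    intro a b c h1 h2 h3
    exact hG {a, b, c} (SimpleGraph.is3Clique_triple_iff.mpr ⟨h1, h2, h3⟩)
  exact main_aux (Fintype.card V) G rfl hTF
end

section
/- (Claim 1.) Let G be a finite simple graph and let F be a subset of the edge set of G such that the graph spanned by F is triangle-free and the graph G − F (with edge set E(G) \ F) is triangle-free. Define the auxiliary graph T whose vertex set is E(G) \ F, where two distinct edges e, f ∈ E(G) \ F are adjacent in T if and only if there exists d ∈ F such that the three edges d, e, f span a triangle in G (i.e., they are the three edges of a triangle of G). Then T is triangle-free. -/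
/-- The three edges `d, e, f` span a triangle in `G`: there are three distinct pairwise
adjacent vertices `x, y, z` with `{d, e, f} = {xy, yz, xz}`. -/
def SpansTriangle {V : Type*} (G : SimpleGraph V) (d e f : Sym2 V) : Prop :=
  ∃ x y z : V, x ≠ y ∧ y ≠ z ∧ x ≠ z ∧ G.Adj x y ∧ G.Adj y z ∧ G.Adj x z ∧
    ({d, e, f} : Set (Sym2 V)) = {s(x, y), s(y, z), s(x, z)}

/-- The auxiliary graph `T` on the vertex set `E(G) \ F`, where two distinct edges
`e, f ∈ E(G) \ F` are adjacent iff there is `d ∈ F` such that `d, e, f` span a triangle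
in `G`. -/
def AuxGraph {V : Type*} (G : SimpleGraph V) (F : Set (Sym2 V)) :
    SimpleGraph ↥(G.edgeSet \ F) :=
  SimpleGraph.fromRel (fun e f => ∃ d ∈ F, SpansTriangle G d e.val f.val)

lemma spansTriangle_comm {V : Type*} {G : SimpleGraph V} {d e f : Sym2 V}
    (h : SpansTriangle G d e f) : SpansTriangle G d f e := by
  obtain ⟨x, y, z, h1, h2, h3, h4, h5, h6, h7⟩ := h
  exact ⟨x, y, z, h1, h2, h3, h4, h5, h6, by rw [← h7, Set.pair_comm f e]⟩

/-- Extract the structure of a spanned triangle when `d ∈ F`, `e, f ∉ F`, `e ≠ f`: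
`e` and `f` share a vertex `v`, and `d` connects the two other endpoints. -/
lemma spansTriangle_extract {V : Type*} {G : SimpleGraph V} {F : Set (Sym2 V)}
    {d e f : Sym2 V} (hd : d ∈ F) (he : e ∉ F) (hf : f ∉ F) (hef : e ≠ f)
    (h : SpansTriangle G d e f) :
    ∃ u v w : V, u ≠ v ∧ v ≠ w ∧ u ≠ w ∧ G.Adj u v ∧ G.Adj v w ∧ G.Adj u w ∧
      e = s(u, v) ∧ f = s(v, w) ∧ d = s(u, w) := by
  obtain ⟨x, y, z, hxy, hyz, hxz, axy, ayz, axz, hset⟩ := h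
  have hde : d ≠ e := fun h => he (h ▸ hd)
  have hdf : d ≠ f := fun h => hf (h ▸ hd)
  have hAB : s(x, y) ≠ s(y, z) := by
    intro h; rw [Sym2.eq_iff] at h; rcases h with ⟨h1, h2⟩ | ⟨h1, h2⟩ <;> simp_all
  have hAC : s(x, y) ≠ s(x, z) := by
    intro h; rw [Sym2.eq_iff] at h; rcases h with ⟨h1, h2⟩ | ⟨h1, h2⟩ <;> simp_all
  have hBC : s(y, z) ≠ s(x, z) := by
    intro h; rw [Sym2.eq_iff] at h; rcases h with ⟨h1, h2⟩ | ⟨h1, h2⟩ <;> simp_all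
  have hd' : d ∈ ({s(x, y), s(y, z), s(x, z)} : Set (Sym2 V)) := by
    rw [← hset]; simp
  have he' : e ∈ ({s(x, y), s(y, z), s(x, z)} : Set (Sym2 V)) := by
    rw [← hset]; simp
  have hf' : f ∈ ({s(x, y), s(y, z), s(x, z)} : Set (Sym2 V)) := by
    rw [← hset]; simp
  simp only [Set.mem_insert_iff, Set.mem_singleton_iff] at hd' he' hf'
  rcases hd' with hd' | hd' | hd'
  · -- d = s(x,y)
    rcases he' with he' | he' | he'
    · exact absurd (hd'.trans he'.symm) hde
    · -- e = s(y,z)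
      have hf'' : f = s(x, z) := by
        rcases hf' with hf' | hf' | hf'
        · exact absurd (hd'.trans hf'.symm) hdf
        · exact absurd (he'.trans hf'.symm) hef
        · exact hf'
      exact ⟨y, z, x, hyz, hxz.symm, hxy.symm, ayz, axz.symm, axy.symm,
        he', hf''.trans Sym2.eq_swap, hd'.trans Sym2.eq_swap⟩
    · -- e = s(x,z)
      have hf'' : f = s(y, z) := by
        rcases hf' with hf' | hf' | hf'
        · exact absurd (hd'.trans hf'.symm) hdf
        · exact hf'
        · exact absurd (he'.trans hf'.symm) hef
      exact ⟨x, z, y, hxz, hyz.symm, hxy, axz, ayz.symm, axy,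
        he', hf''.trans Sym2.eq_swap, hd'⟩
  · -- d = s(y,z)
    rcases he' with he' | he' | he'
    · -- e = s(x,y)
      have hf'' : f = s(x, z) := by
        rcases hf' with hf' | hf' | hf'
        · exact absurd (he'.trans hf'.symm) hef
        · exact absurd (hd'.trans hf'.symm) hdf
        · exact hf'
      exact ⟨y, x, z, hxy.symm, hxz, hyz, axy.symm, axz, ayz,
        he'.trans Sym2.eq_swap, hf'', hd'⟩
    · exact absurd (hd'.trans he'.symm) hde
    · -- e = s(x,z)
      have hf'' : f = s(x, y) := by
        rcases hf' with hf' | hf' | hf'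
        · exact hf'
        · exact absurd (hd'.trans hf'.symm) hdf
        · exact absurd (he'.trans hf'.symm) hef
      exact ⟨z, x, y, hxz.symm, hxy, hyz.symm, axz.symm, axy, ayz.symm,
        he'.trans Sym2.eq_swap, hf'', hd'.trans Sym2.eq_swap⟩
  · -- d = s(x,z)
    rcases he' with he' | he' | he'
    · -- e = s(x,y)
      have hf'' : f = s(y, z) := by
        rcases hf' with hf' | hf' | hf'
        · exact absurd (he'.trans hf'.symm) hef
        · exact hf'
        · exact absurd (hd'.trans hf'.symm) hdf
      exact ⟨x, y, z, hxy, hyz, hxz, axy, ayz, axz, he', hf'', hd'⟩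
    · -- e = s(y,z)
      have hf'' : f = s(x, y) := by
        rcases hf' with hf' | hf' | hf'
        · exact hf'
        · exact absurd (he'.trans hf'.symm) hef
        · exact absurd (hd'.trans hf'.symm) hdf
      exact ⟨z, y, x, hyz.symm, hxy.symm, hxz.symm, ayz.symm, axy.symm, axz.symm,
        he'.trans Sym2.eq_swap, hf''.trans Sym2.eq_swap, hd'.trans Sym2.eq_swap⟩
    · exact absurd (hd'.trans he'.symm) hde

lemma auxGraph_adj_extract {V : Type*} {G : SimpleGraph V} {F : Set (Sym2 V)}
    {E1 E2 : ↥(G.edgeSet \ F)} (h : (AuxGraph G F).Adj E1 E2) :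
    E1 ≠ E2 ∧ ∃ d ∈ F, SpansTriangle G d E1.val E2.val := by
  rw [AuxGraph, SimpleGraph.fromRel_adj] at h
  obtain ⟨hne, h | h⟩ := h
  · exact ⟨hne, h⟩
  · obtain ⟨d, hd, hsp⟩ := h
    exact ⟨hne, d, hd, spansTriangle_comm hsp⟩

/-- Claim 1: if `F ⊆ E(G)`, the graph spanned by `F` is triangle-free, and `G − F` is
triangle-free, then the auxiliary graph `T` is triangle-free. -/
theorem aux_graph_triangle_free {V : Type*} [Fintype V] (G : SimpleGraph V)
    (F : Set (Sym2 V)) (hF : F ⊆ G.edgeSet)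
    (hF_tf : (SimpleGraph.fromEdgeSet F).CliqueFree 3)
    (hGF_tf : (G.deleteEdges F).CliqueFree 3) :
    (AuxGraph G F).CliqueFree 3 := by
  classical
  intro t ht
  rw [SimpleGraph.is3Clique_iff] at ht
  obtain ⟨E1, E2, E3, h12, h13, h23, -⟩ := ht
  obtain ⟨hne12, d12, hd12, hsp12⟩ := auxGraph_adj_extract h12
  obtain ⟨hne13, d13, hd13, hsp13⟩ := auxGraph_adj_extract h13
  obtain ⟨hne23, d23, hd23, hsp23⟩ := auxGraph_adj_extract h23
  have hv12 : E1.val ≠ E2.val := fun h => hne12 (Subtype.ext h)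
  have hv13 : E1.val ≠ E3.val := fun h => hne13 (Subtype.ext h)
  have hv23 : E2.val ≠ E3.val := fun h => hne23 (Subtype.ext h)
  obtain ⟨p1, s12, p2, hA1, hA2, hA3, aA1, aA2, aA3, e1eq, e2eq, d12eq⟩ :=
    spansTriangle_extract hd12 E1.2.2 E2.2.2 hv12 hsp12
  obtain ⟨q1, s13, q3, hB1, hB2, hB3, aB1, aB2, aB3, e1eq', e3eq, d13eq⟩ :=
    spansTriangle_extract hd13 E1.2.2 E3.2.2 hv13 hsp13
  obtain ⟨r2, s23, r3, hC1, hC2, hC3, aC1, aC2, aC3, e2eq', e3eq', d23eq⟩ :=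
    spansTriangle_extract hd23 E2.2.2 E3.2.2 hv23 hsp23
  have hE1 : s(p1, s12) = s(q1, s13) := e1eq ▸ e1eq'
  have hE2 : s(s12, p2) = s(r2, s23) := e2eq ▸ e2eq'
  rw [Sym2.eq_iff] at hE1 hE2
  rcases hE1 with ⟨hq1, hs13⟩ | ⟨hp1, hq1⟩
  · -- Case A: q1 = p1, s13 = s12
    subst hq1; subst hs13
    rcases hE2 with ⟨hr2, hs23⟩ | ⟨hs23, hr2⟩
    · -- r2 := s12, s23 := p2  (e2, e3 meeting at p2)
      subst hr2; subst hs23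
      have hE3 : s(s12, q3) = s(p2, r3) := e3eq ▸ e3eq'
      rw [Sym2.eq_iff] at hE3
      rcases hE3 with ⟨h1, h2⟩ | ⟨h1, h2⟩
      · exact hA2 h1
      · -- s12 = r3, q3 = p2 → E3 = E2
        apply hv23
        rw [e2eq, e3eq, h2, Sym2.eq_swap]
    · -- s23 := s12, r2 := p2 (common vertex s12)
      subst hr2; subst hs23
      have hE3 : s(s12, q3) = s(s12, r3) := e3eq ▸ e3eq'
      rw [Sym2.eq_iff] at hE3
      rcases hE3 with ⟨h1, h2⟩ | ⟨h1, h2⟩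
      · -- q3 = r3: triangle p1, p2, q3 in F
        subst h2
        refine hF_tf {p1, p2, q3} (SimpleGraph.is3Clique_iff.mpr
          ⟨p1, p2, q3, ?_, ?_, ?_, rfl⟩)
        · exact (SimpleGraph.fromEdgeSet_adj F).mpr ⟨d12eq ▸ hd12, hA3⟩
        · exact (SimpleGraph.fromEdgeSet_adj F).mpr ⟨d13eq ▸ hd13, hB3⟩
        · exact (SimpleGraph.fromEdgeSet_adj F).mpr ⟨d23eq ▸ hd23, hC3⟩
      · exact hB2 h2.symm
  · -- Case B: s13 := p1, q1 = s12
    subst hp1; subst hq1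
    rcases hE2 with ⟨hr2, hs23⟩ | ⟨hs23, hr2⟩
    · -- r2 := s12, s23 := p2
      subst hr2; subst hs23
      have hE3 : s(p1, q3) = s(p2, r3) := e3eq ▸ e3eq'
      rw [Sym2.eq_iff] at hE3
      rcases hE3 with ⟨h1, h2⟩ | ⟨h1, h2⟩
      · exact hA3 h1
      · -- p1 = r3, q3 = p2: then d23 = s(s12, r3) = s(s12, p1) = E1 ∈ F, contradiction
        have hd23E1 : d23 = (E1 : Sym2 V) := by
          rw [d23eq, e1eq, ← h1, Sym2.eq_swap]
        exact E1.2.2 (hd23E1 ▸ hd23)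
    · -- s23 := s12, r2 := p2
      subst hr2; subst hs23
      have hE3 : s(p1, q3) = s(s12, r3) := e3eq ▸ e3eq'
      rw [Sym2.eq_iff] at hE3
      rcases hE3 with ⟨h1, h2⟩ | ⟨h1, h2⟩
      · exact hA1 h1
      · exact hB3 h2.symm
end

section
/- For every n divisible by 4, there are at least 2^{n^2/8} distinct triangle-free graphs on the vertex set Fin n. Specifically, fix a partition of Fin n into sets X and Y with |X| = |Y| = n/2, and fix a perfect matching M on X consisting of n/4 disjoint edges. For every function σ assigning to each pair (m, y), where m = {x1, x2} ∈ M and y ∈ Y, one of the two vertices x1 or x2, the graph H_σ with edge set M ∪ { σ(m,y) y : m ∈ M, y ∈ Y } is triangle-free, and distinct choices of σ give distinct graphs; hence there are 2^{(n/4)(n/2)} = 2^{n^2/8} such triangle-free graphs. -/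
/-- The graph `H_σ` of the folklore construction: its edges are the matching edges in `M`
together with, for each pair `(m, y)` of a matching edge `m ∈ M` and a vertex `y ∈ Y`,
the edge joining `y` to the chosen endpoint `σ (m, y)` of `m`. -/
def ConstructionGraph {n : ℕ} (M : Set (Sym2 (Fin n))) (Y : Set (Fin n))
    (σ : M × Y → Fin n) : SimpleGraph (Fin n) :=
  SimpleGraph.fromEdgeSet
    (M ∪ {e : Sym2 (Fin n) | ∃ p : M × Y, e = s(σ p, (p.2 : Fin n))})

/-- The folklore lower-bound construction: for `4 ∣ n`, given a partition of `Fin n` into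
`X` and `Y` with `|X| = |Y| = n/2` and a perfect matching `M` on `X` of `n/4` disjoint
edges, every choice function `σ` picking an endpoint of each matching edge for each
`y ∈ Y` yields a triangle-free graph `H_σ`, distinct choices yield distinct graphs, and
hence there are at least `2 ^ (n²/8)` triangle-free graphs on `Fin n`. -/
theorem construction_lower_bound (n : ℕ) (hn : 4 ∣ n)
    (X Y : Set (Fin n)) (hdisj : Disjoint X Y) (hcover : X ∪ Y = Set.univ)
    (hX : Nat.card X = n / 2) (hY : Nat.card Y = n / 2)
    (M : Set (Sym2 (Fin n))) (hMcard : Nat.card M = n / 4)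
    (hMndiag : ∀ e ∈ M, ¬ e.IsDiag)
    (hMX : ∀ e ∈ M, ∀ v ∈ e, v ∈ X)
    (hMmatch : ∀ x ∈ X, ∃! e, e ∈ M ∧ x ∈ e) :
    (∀ σ : M × Y → Fin n, (∀ p : M × Y, σ p ∈ (p.1 : Sym2 (Fin n))) →
        (ConstructionGraph M Y σ).CliqueFree 3) ∧
    (∀ σ₁ σ₂ : M × Y → Fin n,
        (∀ p : M × Y, σ₁ p ∈ (p.1 : Sym2 (Fin n))) →
        (∀ p : M × Y, σ₂ p ∈ (p.1 : Sym2 (Fin n))) →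
        ConstructionGraph M Y σ₁ = ConstructionGraph M Y σ₂ → σ₁ = σ₂) ∧
    2 ^ (n ^ 2 / 8) ≤ Nat.card {H : SimpleGraph (Fin n) // H.CliqueFree 3} := by
  classical
  have hXY : ∀ v, v ∈ X → v ∈ Y → False := fun v hvX hvY =>
    (Set.disjoint_left.mp hdisj) hvX hvY
  have hmem : ∀ v : Fin n, v ∈ X ∨ v ∈ Y := fun v => by
    have : v ∈ X ∪ Y := hcover ▸ Set.mem_univ v
    exact this
  have hMuniq : ∀ x, x ∈ X → ∀ e1 e2, e1 ∈ M → e2 ∈ M → x ∈ e1 → x ∈ e2 → e1 = e2 := by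
    intro x hx e1 e2 h1 h2 hx1 hx2
    obtain ⟨e, -, hu⟩ := hMmatch x hx
    rw [hu e1 ⟨h1, hx1⟩, hu e2 ⟨h2, hx2⟩]
  -- classification of edges
  have hclass : ∀ (σ : M × Y → Fin n),
      ∀ u v, (ConstructionGraph M Y σ).Adj u v →
      (s(u, v) ∈ M) ∨ (∃ p : M × Y, u = σ p ∧ v = (p.2 : Fin n)) ∨
        (∃ p : M × Y, v = σ p ∧ u = (p.2 : Fin n)) := by
    intro σ u v huv
    rw [ConstructionGraph, SimpleGraph.fromEdgeSet_adj] at huv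
    rcases huv.1 with h | h
    · exact Or.inl h
    · obtain ⟨p, hp⟩ := h
      rw [Sym2.eq_iff] at hp
      rcases hp with ⟨h1, h2⟩ | ⟨h1, h2⟩
      · exact Or.inr (Or.inl ⟨p, h1, h2⟩)
      · exact Or.inr (Or.inr ⟨p, h2, h1⟩)
  have hσX : ∀ (σ : M × Y → Fin n), (∀ p : M × Y, σ p ∈ (p.1 : Sym2 (Fin n))) →
      ∀ p, σ p ∈ X := fun σ hσ p => hMX p.1 p.1.2 (σ p) (hσ p)
  -- edges touching Y
  have hYadj : ∀ (σ : M × Y → Fin n), (∀ p : M × Y, σ p ∈ (p.1 : Sym2 (Fin n))) →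
      ∀ u v, (ConstructionGraph M Y σ).Adj u v → v ∈ Y →
      ∃ p : M × Y, u = σ p ∧ v = (p.2 : Fin n) := by
    intro σ hσ u v huv hv
    rcases hclass σ u v huv with h | ⟨p, hp1, hp2⟩ | ⟨p, hp1, hp2⟩
    · exact absurd (hMX _ h v (by simp)) (fun hx => hXY v hx hv)
    · exact ⟨p, hp1, hp2⟩
    · exact absurd (show v ∈ X by rw [hp1]; exact hσX σ hσ p) (fun hx => hXY v hx hv)
  have hYX : ∀ (σ : M × Y → Fin n), (∀ p : M × Y, σ p ∈ (p.1 : Sym2 (Fin n))) →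
      ∀ u v, (ConstructionGraph M Y σ).Adj u v → v ∈ Y → u ∈ X := by
    intro σ hσ u v huv hv
    obtain ⟨p, hp, -⟩ := hYadj σ hσ u v huv hv
    rw [hp]; exact hσX σ hσ p
  -- edges inside X are matching edges
  have hXXadj : ∀ (σ : M × Y → Fin n), (∀ p : M × Y, σ p ∈ (p.1 : Sym2 (Fin n))) →
      ∀ u v, (ConstructionGraph M Y σ).Adj u v → u ∈ X → v ∈ X → s(u, v) ∈ M := by
    intro σ hσ u v huv hu hv
    rcases hclass σ u v huv with h | ⟨p, hp1, hp2⟩ | ⟨p, hp1, hp2⟩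
    · exact h
    · exact absurd hv (fun hv' => hXY v hv' (by rw [hp2]; exact p.2.2))
    · exact absurd hu (fun hu' => hXY u hu' (by rw [hp2]; exact p.2.2))
  -- Part 1 : triangle-free
  have part1 : ∀ σ : M × Y → Fin n, (∀ p : M × Y, σ p ∈ (p.1 : Sym2 (Fin n))) →
      (ConstructionGraph M Y σ).CliqueFree 3 := by
    intro σ hσ t ht
    rw [SimpleGraph.is3Clique_iff] at ht
    obtain ⟨a, b, c, hab, hac, hbc, -⟩ := ht
    have hD : ∀ u v y : Fin n, (ConstructionGraph M Y σ).Adj u v →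
        (ConstructionGraph M Y σ).Adj u y → (ConstructionGraph M Y σ).Adj v y →
        u ∈ X → v ∈ X → y ∈ Y → False := by
      intro u v y huv huy hvy hu hv hy
      have huvM : s(u, v) ∈ M := hXXadj σ hσ u v huv hu hv
      obtain ⟨p, hp1, hp2⟩ := hYadj σ hσ u y huy hy
      obtain ⟨q, hq1, hq2⟩ := hYadj σ hσ v y hvy hy
      have hpM : (p.1 : Sym2 (Fin n)) = s(u, v) :=
        hMuniq u hu _ _ p.1.2 huvM (by rw [hp1]; exact hσ p) (by simp)
      have hqM : (q.1 : Sym2 (Fin n)) = s(u, v) :=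
        hMuniq v hv _ _ q.1.2 huvM (by rw [hq1]; exact hσ q)
          (by rw [Sym2.mem_iff]; right; rfl)
      have hpq : p = q :=
        Prod.ext (Subtype.ext (hpM.trans hqM.symm)) (Subtype.ext (hp2.symm.trans hq2))
      exact huv.ne (hp1.trans ((congrArg σ hpq).trans hq1.symm))
    rcases hmem a with ha | ha
    · rcases hmem b with hb | hb
      · rcases hmem c with hc | hc
        · have h1 : s(a, b) ∈ M := hXXadj σ hσ a b hab ha hb
          have h2 : s(a, c) ∈ M := hXXadj σ hσ a c hac ha hc
          have heq := hMuniq a ha _ _ h1 h2 (by simp) (by simp)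
          rw [Sym2.eq_iff] at heq
          rcases heq with ⟨-, h⟩ | ⟨h1', h2'⟩
          · exact hbc.ne h
          · exact hbc.ne (h2'.trans h1')
        · exact hD a b c hab hac hbc ha hb hc
      · have hc : c ∈ X := hYX σ hσ c b hbc.symm hb
        exact hD a c b hac hab hbc.symm ha hc hb
    · have hb : b ∈ X := hYX σ hσ b a hab.symm ha
      have hc : c ∈ X := hYX σ hσ c a hac.symm ha
      exact hD b c a hbc hab.symm hac.symm hb hc ha
  -- Part 2 : injectivity
  have part2 : ∀ σ₁ σ₂ : M × Y → Fin n,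
      (∀ p : M × Y, σ₁ p ∈ (p.1 : Sym2 (Fin n))) →
      (∀ p : M × Y, σ₂ p ∈ (p.1 : Sym2 (Fin n))) →
      ConstructionGraph M Y σ₁ = ConstructionGraph M Y σ₂ → σ₁ = σ₂ := by
    intro σ₁ σ₂ hσ₁ hσ₂ heq
    funext p
    by_contra hne
    have hadj : (ConstructionGraph M Y σ₁).Adj (σ₁ p) (p.2 : Fin n) := by
      rw [ConstructionGraph, SimpleGraph.fromEdgeSet_adj]
      refine ⟨Or.inr ⟨p, rfl⟩, ?_⟩
      intro h
      exact hXY (σ₁ p) (hσX σ₁ hσ₁ p) (by rw [h]; exact p.2.2)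
    rw [heq] at hadj
    rcases hclass σ₂ _ _ hadj with h | ⟨q, hq1, hq2⟩ | ⟨q, hq1, hq2⟩
    · exact hXY _ (hMX _ h (p.2 : Fin n) (by rw [Sym2.mem_iff]; right; rfl)) p.2.2
    · have hm : (q.1 : Sym2 (Fin n)) = p.1 :=
        hMuniq (σ₁ p) (hσX σ₁ hσ₁ p) _ _ q.1.2 p.1.2 (by rw [hq1]; exact hσ₂ q) (hσ₁ p)
      have hqp : q = p := Prod.ext (Subtype.ext hm) (Subtype.ext hq2.symm)
      exact hne (hq1.trans (congrArg σ₂ hqp))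
    · exact hXY (σ₁ p) (hσX σ₁ hσ₁ p) (by rw [hq2]; exact q.2.2)
  refine ⟨part1, part2, ?_⟩
  -- Part 3 : counting
  haveI : Fintype M := Fintype.ofFinite _
  haveI : Fintype Y := Fintype.ofFinite _
  set P := {σ : M × Y → Fin n // ∀ p : M × Y, σ p ∈ (p.1 : Sym2 (Fin n))} with hP
  have hinj : Function.Injective (fun σ : P =>
      (⟨ConstructionGraph M Y σ.1, part1 σ.1 σ.2⟩ :
        {H : SimpleGraph (Fin n) // H.CliqueFree 3})) := by
    intro σ₁ σ₂ h
    exact Subtype.ext (part2 σ₁.1 σ₂.1 σ₁.2 σ₂.2 (congrArg Subtype.val h))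
  have hle : Nat.card P ≤ Nat.card {H : SimpleGraph (Fin n) // H.CliqueFree 3} :=
    Nat.card_le_card_of_injective _ hinj
  have hcardP : Nat.card P = 2 ^ (n ^ 2 / 8) := by
    have e1 : P ≃ ∀ p : M × Y, {v : Fin n // v ∈ (p.1 : Sym2 (Fin n))} :=
      Equiv.subtypePiEquivPi
    rw [Nat.card_congr e1, Nat.card_pi]
    have h2 : ∀ p : M × Y, Nat.card {v : Fin n // v ∈ (p.1 : Sym2 (Fin n))} = 2 := by
      intro p
      obtain ⟨⟨a, b⟩, hab⟩ := Quot.exists_rep (p.1 : Sym2 (Fin n))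
      have hab' : (p.1 : Sym2 (Fin n)) = s(a, b) := hab.symm
      have hne : a ≠ b := by
        intro h
        exact hMndiag _ p.1.2 (by rw [hab', h]; exact Sym2.mk_isDiag_iff.mpr rfl)
      have hset : {v : Fin n | v ∈ (p.1 : Sym2 (Fin n))} = {a, b} := by
        ext v
        rw [Set.mem_setOf_eq, hab', Sym2.mem_iff]
        rfl
      calc Nat.card {v : Fin n // v ∈ (p.1 : Sym2 (Fin n))}
          = Nat.card ({a, b} : Set (Fin n)) := by rw [← hset]; rfl
        _ = ({a, b} : Set (Fin n)).ncard := (Nat.card_coe_set_eq _)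
        _ = 2 := Set.ncard_pair hne
    rw [Finset.prod_congr rfl (fun p _ => h2 p), Finset.prod_const, Finset.card_univ]
    have hcardMY : Fintype.card (↥M × ↥Y) = (n / 4) * (n / 2) := by
      rw [Fintype.card_prod, ← Nat.card_eq_fintype_card, ← Nat.card_eq_fintype_card,
        hMcard, hY]
    rw [hcardMY]
    obtain ⟨k, rfl⟩ := hn
    have e1 : 4 * k / 4 = k := by omega
    have e2 : 4 * k / 2 = 2 * k := by omega
    have e3 : (4 * k) ^ 2 = (k * (2 * k)) * 8 := by ring
    rw [e1, e2, e3, Nat.mul_div_cancel _ (by norm_num : 0 < 8)]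
  rw [← hcardP]
  exact hle
end
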